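/- arXiv:0901.2923 — 10 statements merged into one kernel-verified Lean document; each statement's English description precedes it below -/
import Mathlib

section
/- For N ≥ 1 and U ∈ O(N), one has ||U||₁ = N·√N if and only if |U_{ij}| = 1/√N for all i,j, i.e. if and only if the matrix H = √N·U has all entries ±1 and pairwise orthogonal rows (H is a Hadamard matrix). -/
/-!
For an orthogonal `U` the squares of the entries sum to `N`, so with `s = √N`
`∑ᵢⱼ (s |Uᵢⱼ| - 1)² = 2 N² - 2 s ∑ᵢⱼ |Uᵢⱼ|`. Hence `‖U‖₁ ≤ N √N`, with equality exactly when
`s |Uᵢⱼ| = 1` for every entry. The rows of `s • U` are orthogonal for any scalar `s`, so the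
Hadamard condition on `√N • U` reduces to the same entrywise condition.
-/

open Matrix

/-- A Hadamard matrix of order `N`: all entries are `±1` and the rows are
pairwise orthogonal. -/
def IsHadamard {N : ℕ} (H : Matrix (Fin N) (Fin N) ℝ) : Prop :=
  (∀ i j, H i j = 1 ∨ H i j = -1) ∧
    ∀ i j, i ≠ j → ∑ k, H i k * H j k = 0

theorem two_mul_sum_abs_eq_iff {ι : Type*} [Fintype ι] (s : ℝ) (x : ι → ℝ) :
    2 * s * ∑ i, |x i| = s ^ 2 * ∑ i, x i ^ 2 + Fintype.card ι ↔ ∀ i, s * |x i| = 1 := by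
  have hsq : ∑ i, (s * |x i| - 1) ^ 2 =
      s ^ 2 * ∑ i, x i ^ 2 + Fintype.card ι - 2 * s * ∑ i, |x i| := by
    simp only [sub_sq, mul_pow, sq_abs, mul_one, one_pow, Finset.sum_add_distrib,
      Finset.sum_sub_distrib, ← Finset.mul_sum, Finset.sum_const, Finset.card_univ,
      nsmul_eq_mul]
    ring
  have hzero : (∑ i, (s * |x i| - 1) ^ 2 = 0) ↔ ∀ i, s * |x i| = 1 := by
    simp [Finset.sum_eq_zero_iff_of_nonneg fun i _ => sq_nonneg (s * |x i| - 1), sub_eq_zero]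
  rw [← hzero, hsq, sub_eq_zero, eq_comm]

theorem sum_sum_sq_eq_card_of_mul_transpose_eq_one {m n R : Type*} [Fintype m] [Fintype n]
    [DecidableEq m] [Semiring R] {U : Matrix m n R} (hU : U * Uᵀ = 1) :
    ∑ i, ∑ j, U i j ^ 2 = Fintype.card m := by
  simpa [trace, mul_apply, sq] using congrArg trace hU

theorem sum_sum_abs_eq_iff_of_mul_transpose_eq_one {n : Type*} [Fintype n] [DecidableEq n]
    [Nonempty n] {U : Matrix n n ℝ} (hU : U * Uᵀ = 1) :
    ∑ i, ∑ j, |U i j| = Fintype.card n * √(Fintype.card n) ↔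
      ∀ i j, √(Fintype.card n) * |U i j| = 1 := by
  set s := √(Fintype.card n)
  have hs : 0 < s := Real.sqrt_pos.mpr (by exact_mod_cast Fintype.card_pos)
  have hs2 : s ^ 2 = Fintype.card n := Real.sq_sqrt (Nat.cast_nonneg _)
  have hentries := two_mul_sum_abs_eq_iff s fun p : n × n => U p.1 p.2
  simp only [Fintype.sum_prod_type, Fintype.card_prod, Prod.forall, Nat.cast_mul,
    sum_sum_sq_eq_card_of_mul_transpose_eq_one hU, hs2] at hentries
  rw [← hentries, ← (mul_right_injective₀ (by positivity : 2 * s ≠ 0)).eq_iff, ← hs2]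
  ring_nf

theorem isHadamard_smul_iff {N : ℕ} {U : Matrix (Fin N) (Fin N) ℝ} (hU : U * Uᵀ = 1) (s : ℝ) :
    _root_.IsHadamard (s • U) ↔ ∀ i j, |s * U i j| = 1 := by
  have horth : ∀ i j, i ≠ j → ∑ k, (s • U) i k * (s • U) j k = 0 := fun i j hij => by
    have hUij := congrFun (congrFun hU i) j
    simp only [mul_apply, transpose_apply, one_apply_ne hij] at hUij
    simp only [Matrix.smul_apply, smul_eq_mul, mul_mul_mul_comm, ← Finset.mul_sum, hUij, mul_zero]
  rw [_root_.IsHadamard, and_iff_left horth]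
  simp only [Matrix.smul_apply, smul_eq_mul, abs_eq zero_le_one]

/-- For `N ≥ 1` and `U ∈ O(N)`, one has `‖U‖₁ = N·√N` iff `|Uᵢⱼ| = 1/√N` for
all `i, j`, iff `H = √N·U` is a Hadamard matrix. -/
theorem norm1_eq_iff_hadamard (N : ℕ) (hN : 1 ≤ N)
    (U : Matrix (Fin N) (Fin N) ℝ) (hU : U * Uᵀ = 1) :
    ((∑ i, ∑ j, |U i j|) = (N : ℝ) * Real.sqrt N ↔
      ∀ i j, |U i j| = 1 / Real.sqrt N) ∧
    ((∑ i, ∑ j, |U i j|) = (N : ℝ) * Real.sqrt N ↔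
      _root_.IsHadamard (Real.sqrt N • U)) := by
  have : Nonempty (Fin N) := Fin.pos_iff_nonempty.mp hN
  have hs : 0 < √(N : ℝ) := Real.sqrt_pos.mpr (by exact_mod_cast hN)
  have hnorm := sum_sum_abs_eq_iff_of_mul_transpose_eq_one hU
  rw [Fintype.card_fin] at hnorm
  have hentry : ∀ i j, √(N : ℝ) * |U i j| = 1 ↔ |U i j| = 1 / √(N : ℝ) := fun i j => by
    rw [eq_div_iff hs.ne', mul_comm]
  refine ⟨hnorm.trans (forall₂_congr hentry), hnorm.trans ?_⟩
  simp only [isHadamard_smul_iff hU, abs_mul, abs_of_pos hs]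
end

section
/- For every orthogonal matrix U ∈ O(3), the 1-norm satisfies ||U||₁ ≤ 5. -/
/-!
Write `∑ |U i j| = ∑ i, ⟪s i, u i⟫`, where the `u i` are the orthonormal rows of `U` and the
`s i ∈ {±1}³` are the rows of its sign pattern. Two sign vectors in `ℝ³` are either equal up to
sign or have inner product `±1`. If two rows `s i`, `s j` agree up to sign, Cauchy–Schwarz bounds
the sum by `√3 · √2 + √3 < 5`. Otherwise the Gram matrix of the `s i` is `4 - σσᵀ` with
`σ i = ∏ k, s i k = ±1`; its square root `Q = 2 - σσᵀ/3` has trace `5`, and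
`0 ≤ tr ((S - QU)ᵀ Q⁻¹ (S - QU)) = 2 (5 - ∑ i, ⟪s i, u i⟫)`.
-/

open Matrix RealInnerProductSpace

section InnerProductSpace

variable {E : Type*} [NormedAddCommGroup E] [InnerProductSpace ℝ E]

theorem real_inner_sq_le (x y : E) : ⟪x, y⟫ ^ 2 ≤ ‖x‖ ^ 2 * ‖y‖ ^ 2 := by
  simpa only [sq, real_inner_self_eq_norm_sq] using real_inner_mul_inner_self_le x y

theorem inner_add_inner_add_inner_le_five_of_eq_or_eq_neg {a b c x y z : E}
    (hab : b = a ∨ b = -a) (ha : ‖a‖ ^ 2 = 3) (hc : ‖c‖ ^ 2 = 3)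
    (hx : ‖x‖ = 1) (hy : ‖y‖ = 1) (hz : ‖z‖ = 1) (hxy : ⟪x, y⟫ = 0) :
    ⟪a, x⟫ + ⟪b, y⟫ + ⟪c, z⟫ ≤ 5 := by
  obtain ⟨w, hw, hsum⟩ : ∃ w : E, ‖w‖ ^ 2 = 2 ∧ ⟪a, x⟫ + ⟪b, y⟫ = ⟪a, w⟫ := by
    rcases hab with rfl | rfl
    · refine ⟨x + y, ?_, (inner_add_right _ _ _).symm⟩
      rw [norm_add_sq_real, hx, hy, hxy]; norm_num
    · refine ⟨x - y, ?_, by rw [inner_sub_right, inner_neg_left]; ring⟩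
      rw [norm_sub_sq_real, hx, hy, hxy]; norm_num
  have h₁ : ⟪a, w⟫ ^ 2 ≤ 6 := by nlinarith [real_inner_sq_le a w]
  have h₂ : ⟪c, z⟫ ^ 2 ≤ 3 := by nlinarith [real_inner_sq_le c z]
  rw [hsum]
  nlinarith [sq_nonneg (⟪a, w⟫ - 3), sq_nonneg (⟪c, z⟫ - 2)]

theorem inner_add_inner_add_inner_le_five_of_inner_eq_neg_mul {a b c x y z : E} {α β γ : ℝ}
    (hα : α ^ 2 = 1) (hβ : β ^ 2 = 1) (hγ : γ ^ 2 = 1)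
    (ha : ‖a‖ ^ 2 = 3) (hb : ‖b‖ ^ 2 = 3) (hc : ‖c‖ ^ 2 = 3)
    (hab : ⟪a, b⟫ = -(α * β)) (hac : ⟪a, c⟫ = -(α * γ)) (hbc : ⟪b, c⟫ = -(β * γ))
    (hx : ‖x‖ = 1) (hy : ‖y‖ = 1) (hz : ‖z‖ = 1)
    (hxy : ⟪x, y⟫ = 0) (hxz : ⟪x, z⟫ = 0) (hyz : ⟪y, z⟫ = 0) :
    ⟪a, x⟫ + ⟪b, y⟫ + ⟪c, z⟫ ≤ 5 := by
  set d := α • x + β • y + γ • z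
  -- `18 tr ((S - QU)ᵀ Q⁻¹ (S - QU))` for `S`, `U` with rows `a, b, c` and `x, y, z`,
  -- `σ = (α, β, γ)` and `Q = 2 - σσᵀ/3`.
  have hsos : ‖(3 : ℝ) • a - (6 : ℝ) • x + α • d‖ ^ 2 + ‖(3 : ℝ) • b - (6 : ℝ) • y + β • d‖ ^ 2
      + ‖(3 : ℝ) • c - (6 : ℝ) • z + γ • d‖ ^ 2 + 3 * ‖α • a + β • b + γ • c - d‖ ^ 2
      = 36 * (5 - (⟪a, x⟫ + ⟪b, y⟫ + ⟪c, z⟫)) := by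
    simp only [d, ← real_inner_self_eq_norm_sq, inner_add_left, inner_add_right, inner_sub_left,
      inner_sub_right, inner_smul_left, inner_smul_right, RCLike.conj_to_real]
    simp only [real_inner_self_eq_norm_sq, real_inner_comm] at hab hac hbc hxy hxz hyz ⊢
    simp only [ha, hb, hc, hab, hac, hbc, hx, hy, hz, hxy, hxz, hyz, one_pow]
    linear_combination (α ^ 2 + 1 - 4 * (β ^ 2 + γ ^ 2)) * hα + (β ^ 2 - 4 * γ ^ 2 - 3) * hβ
      + (γ ^ 2 - 7) * hγ
  have : 0 ≤ 36 * (5 - (⟪a, x⟫ + ⟪b, y⟫ + ⟪c, z⟫)) := hsos ▸ by positivity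
  linarith

end InnerProductSpace

def IsSignVector {n : Type*} (v : EuclideanSpace ℝ n) : Prop := ∀ i, v i = 1 ∨ v i = -1

namespace IsSignVector

variable {n : Type*} {a : EuclideanSpace ℝ n}

theorem sq_apply (ha : IsSignVector a) (i : n) : a i ^ 2 = 1 := by
  rcases ha i with h | h <;> simp [h]

variable [Fintype n]

theorem norm_sq (ha : IsSignVector a) : ‖a‖ ^ 2 = Fintype.card n := by
  simp [EuclideanSpace.real_norm_sq_eq, ha.sq_apply]

theorem sq_prod (ha : IsSignVector a) : (∏ i, a i) ^ 2 = 1 := by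
  simp [← Finset.prod_pow, ha.sq_apply]

theorem eq_or_eq_neg_or_inner_eq {a b : EuclideanSpace ℝ (Fin 3)} (ha : IsSignVector a)
    (hb : IsSignVector b) : (b = a ∨ b = -a) ∨ ⟪a, b⟫ = -((∏ i, a i) * ∏ i, b i) := by
  -- `⟪a, b⟫` is a sum of the three signs `a i * b i`; when it is `±1`, their product is `-⟪a, b⟫`.
  have ha' : a = WithLp.toLp 2 ![a 0, a 1, a 2] := by ext i; fin_cases i <;> rfl
  have hb' : b = WithLp.toLp 2 ![b 0, b 1, b 2] := by ext i; fin_cases i <;> rfl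
  rw [ha', hb']
  rcases ha 0 with h0 | h0 <;> rcases ha 1 with h1 | h1 <;> rcases ha 2 with h2 | h2 <;>
  rcases hb 0 with k0 | k0 <;> rcases hb 1 with k1 | k1 <;> rcases hb 2 with k2 | k2 <;>
    simp [h0, h1, h2, k0, k1, k2, ← WithLp.toLp_neg, (WithLp.toLp_injective 2).eq_iff,
      EuclideanSpace.inner_toLp_toLp, dotProduct, Fin.sum_univ_three, Fin.prod_univ_three]

end IsSignVector

theorem Matrix.orthonormal_toLp_rows {n : Type*} [Fintype n] [DecidableEq n]
    {U : Matrix n n ℝ} (hU : U * Uᵀ = 1) : Orthonormal ℝ fun i => WithLp.toLp 2 (U i) := by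
  rw [orthonormal_iff_ite]
  intro i j
  rw [EuclideanSpace.inner_toLp_toLp, ← Matrix.one_apply, ← hU, Matrix.mul_apply]
  simp [dotProduct, mul_comm]

theorem sum_inner_le_five_of_isSignVector {s u : Fin 3 → EuclideanSpace ℝ (Fin 3)} (hs : ∀ i, IsSignVector (s i))
    (hu : Orthonormal ℝ u) : ∑ i, ⟪s i, u i⟫ ≤ 5 := by
  have hs3 (i : Fin 3) : ‖s i‖ ^ 2 = 3 := by simpa using (hs i).norm_sq
  have hu0 {i j : Fin 3} (h : i ≠ j) : ⟪u i, u j⟫ = 0 := hu.2 h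
  rw [Fin.sum_univ_three]
  rcases (hs 0).eq_or_eq_neg_or_inner_eq (hs 1) with h01 | h01
  · exact inner_add_inner_add_inner_le_five_of_eq_or_eq_neg h01 (hs3 0) (hs3 2)
      (hu.1 0) (hu.1 1) (hu.1 2) (hu0 (by decide))
  rcases (hs 0).eq_or_eq_neg_or_inner_eq (hs 2) with h02 | h02
  · linarith [inner_add_inner_add_inner_le_five_of_eq_or_eq_neg h02 (hs3 0) (hs3 1)
      (hu.1 0) (hu.1 2) (hu.1 1) (hu0 (by decide : (0 : Fin 3) ≠ 2))]
  rcases (hs 1).eq_or_eq_neg_or_inner_eq (hs 2) with h12 | h12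
  · linarith [inner_add_inner_add_inner_le_five_of_eq_or_eq_neg h12 (hs3 1) (hs3 0)
      (hu.1 1) (hu.1 2) (hu.1 0) (hu0 (by decide : (1 : Fin 3) ≠ 2))]
  exact inner_add_inner_add_inner_le_five_of_inner_eq_neg_mul (hs 0).sq_prod (hs 1).sq_prod
    (hs 2).sq_prod (hs3 0) (hs3 1) (hs3 2) h01 h02 h12 (hu.1 0) (hu.1 1) (hu.1 2)
    (hu0 (by decide)) (hu0 (by decide)) (hu0 (by decide))

/-- For every orthogonal matrix `U ∈ O(3)`, the 1-norm satisfies `‖U‖₁ ≤ 5`. -/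
theorem norm1_le_five_of_orthogonal_three
    (U : Matrix (Fin 3) (Fin 3) ℝ) (hU : U * Uᵀ = 1) :
    ∑ i, ∑ j, |U i j| ≤ 5 := by
  set s : Fin 3 → EuclideanSpace ℝ (Fin 3) :=
    fun i => WithLp.toLp 2 fun j => if 0 ≤ U i j then 1 else -1
  have hs (i : Fin 3) : IsSignVector (s i) := fun j => by
    by_cases h : 0 ≤ U i j <;> simp [s, h]
  have habs : ∑ i, ∑ j, |U i j| = ∑ i, ⟪s i, WithLp.toLp 2 (U i)⟫ := by
    refine Finset.sum_congr rfl fun i _ => Finset.sum_congr rfl fun j _ => ?_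
    by_cases h : 0 ≤ U i j
    · simp [s, h, abs_of_nonneg h]
    · simp [s, h, abs_of_neg (not_le.mp h)]
  rw [habs]
  exact sum_inner_le_five_of_isSignVector hs (orthonormal_toLp_rows hU)
end

section
/- The supremum of the 1-norm over O(3) equals 5; moreover this supremum is attained, e.g. by the orthogonal matrix A = (1/3)·[[1,2,2],[2,1,−2],[−2,2,−1]], which satisfies ||A||₁ = 5. -/
/-
Let `S` be the `±1` matrix of signs of `U`, so that `‖U‖₁ = tr (Sᵀ U)`. Diagonalising
`Sᵀ S = V diag(λ) Vᵀ` and applying Cauchy–Schwarz column by column to `S V` and `U V` bounds this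
trace, for orthogonal `U`, by the nuclear norm `∑ √λᵢ` of `S`. For a `3 × 3` sign matrix, `Sᵀ S`
has diagonal `3` and odd off-diagonal entries, so `∑ λᵢ = 9` and `∑ λᵢ² = tr ((Sᵀ S)²) ≥ 33`,
while `∏ λᵢ = (det S)² ≤ 16` because `det S` is a sum of six `±1` terms whose product is `-1`.
These three constraints force `∑ √λᵢ ≤ 5`.
-/

open Matrix

noncomputable def matrixA : Matrix (Fin 3) (Fin 3) ℝ :=
  (1 / 3 : ℝ) • !![1, 2, 2; 2, 1, -2; -2, 2, -1]

lemma one_le_sq_add_add {x y z : ℝ} (hx : x ^ 2 = 1) (hy : y ^ 2 = 1) (hz : z ^ 2 = 1) :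
    1 ≤ (x + y + z) ^ 2 := by
  rw [sq_eq_one_iff] at hx hy hz
  rcases hx with rfl | rfl <;> rcases hy with rfl | rfl <;> rcases hz with rfl | rfl <;> norm_num

lemma sq_add_six_le_sixteen {a b c d e f : ℝ} (ha : a ^ 2 = 1) (hb : b ^ 2 = 1) (hc : c ^ 2 = 1)
    (hd : d ^ 2 = 1) (he : e ^ 2 = 1) (hf : f ^ 2 = 1) (hprod : a * b * c * d * e * f = -1) :
    (a + b + c + d + e + f) ^ 2 ≤ 16 := by
  rw [sq_eq_one_iff] at ha hb hc hd he hf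
  rcases ha with rfl | rfl <;> rcases hb with rfl | rfl <;> rcases hc with rfl | rfl <;>
    rcases hd with rfl | rfl <;> rcases he with rfl | rfl <;> rcases hf with rfl | rfl <;>
    revert hprod <;> norm_num

lemma sqrt_add_sqrt_add_sqrt_le_five {x y z : ℝ} (hx : 0 ≤ x) (hy : 0 ≤ y) (hz : 0 ≤ z)
    (hsum : x + y + z = 9) (hsq : 33 ≤ x ^ 2 + y ^ 2 + z ^ 2) (hprod : x * y * z ≤ 16) :
    √x + √y + √z ≤ 5 := by
  obtain ⟨a, ha, rfl⟩ : ∃ a, 0 ≤ a ∧ a ^ 2 = x := ⟨√x, Real.sqrt_nonneg x, Real.sq_sqrt hx⟩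
  obtain ⟨b, hb, rfl⟩ : ∃ b, 0 ≤ b ∧ b ^ 2 = y := ⟨√y, Real.sqrt_nonneg y, Real.sq_sqrt hy⟩
  obtain ⟨c, hc, rfl⟩ : ∃ c, 0 ≤ c ∧ c ^ 2 = z := ⟨√z, Real.sqrt_nonneg z, Real.sq_sqrt hz⟩
  rw [Real.sqrt_sq ha, Real.sqrt_sq hb, Real.sqrt_sq hc]
  set s := a + b + c
  set p := a * b + b * c + c * a
  have hs : s ^ 2 = 9 + 2 * p := by linear_combination hsum
  have habc : a * b * c ≤ 4 := by nlinarith [mul_nonneg (mul_nonneg ha hb) hc]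
  -- `p² = ∑ a²b² + 2abc·s` with `∑ a²b² = (81 - ∑ x²) / 2`; then `(s² - 9)² = 4p² ≤ 96 + 32s`
  have hp : p ^ 2 ≤ 24 + 8 * s := by nlinarith [mul_nonneg (mul_nonneg ha hb) hc]
  have hquartic : (s - 5) * (s + 1) ^ 2 * (s + 3) ≤ 0 := by nlinarith
  have hs0 : 0 ≤ s := by positivity
  by_contra! h
  have : 0 < (s - 5) * (s + 1) ^ 2 * (s + 3) :=
    mul_pos (mul_pos (sub_pos.2 h) (by positivity)) (by positivity)
  linarith

namespace Matrix

section NuclearNormBound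

variable {m n : Type*} [Fintype m] [Fintype n]

theorem trace_conjTranspose_mul_le (X Y : Matrix m n ℝ) :
    (Xᴴ * Y).trace ≤ ∑ i, √((Xᴴ * X) i i) * √((Yᴴ * Y) i i) := by
  simp only [trace, diag, mul_apply, conjTranspose_apply, star_trivial, ← sq]
  gcongr with i
  exact Real.sum_mul_le_sqrt_mul_sqrt _ _ _

theorem trace_conjTranspose_mul_le_sum_sqrt [DecidableEq n] {M U : Matrix m n ℝ}
    (hU : Uᴴ * U = 1) {V : Matrix n n ℝ} (hV : V ∈ unitaryGroup n ℝ) {d : n → ℝ}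
    (hd : Vᴴ * (Mᴴ * M) * V = diagonal d) :
    (Mᴴ * U).trace ≤ ∑ i, √(d i) := by
  have hMV : (M * V)ᴴ * (M * V) = diagonal d := by
    rw [conjTranspose_mul, ← hd]; simp only [Matrix.mul_assoc]
  have hUV : (U * V)ᴴ * (U * V) = 1 := by
    rw [conjTranspose_mul, Matrix.mul_assoc, ← Matrix.mul_assoc Uᴴ, hU, Matrix.one_mul,
      ← star_eq_conjTranspose, Unitary.star_mul_self_of_mem hV]
  calc (Mᴴ * U).trace = ((M * V)ᴴ * (U * V)).trace := by
        simp only [conjTranspose_mul, ← Matrix.mul_assoc]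
        rw [trace_mul_comm (Vᴴ * Mᴴ * U), ← Matrix.mul_assoc, ← Matrix.mul_assoc,
          ← star_eq_conjTranspose, Unitary.mul_star_self_of_mem hV, Matrix.one_mul]
    _ ≤ ∑ i, √(((M * V)ᴴ * (M * V)) i i) * √(((U * V)ᴴ * (U * V)) i i) :=
        trace_conjTranspose_mul_le _ _
    _ = ∑ i, √(d i) := by rw [hMV, hUV]; simp

theorem trace_conjTranspose_mul_le_sum_sqrt_eigenvalues [DecidableEq n] {M U : Matrix m n ℝ}
    (hU : Uᴴ * U = 1) :
    (Mᴴ * U).trace ≤ ∑ i, √((isHermitian_conjTranspose_mul_self M).eigenvalues i) := by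
  refine trace_conjTranspose_mul_le_sum_sqrt hU
    (isHermitian_conjTranspose_mul_self M).eigenvectorUnitary.2 ?_
  simpa [star_eq_conjTranspose] using
    (isHermitian_conjTranspose_mul_self M).conjStarAlgAut_star_eigenvectorUnitary

theorem IsHermitian.trace_mul_self_eq_sum_sq_eigenvalues {𝕜 : Type*} [RCLike 𝕜] [DecidableEq n]
    {A : Matrix n n 𝕜} (hA : A.IsHermitian) :
    (A * A).trace = ∑ i, (hA.eigenvalues i : 𝕜) ^ 2 := by
  conv_lhs => rw [hA.spectral_theorem]
  rw [← map_mul, Unitary.conjStarAlgAut_apply, trace_mul_cycle,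
    Unitary.coe_star_mul_self, one_mul, diagonal_mul_diagonal, trace_diagonal]
  simp [sq]

theorem exists_sign_matrix_sum_abs_eq_trace (U : Matrix m n ℝ) :
    ∃ S : Matrix m n ℝ, (∀ i j, S i j ^ 2 = 1) ∧ ∑ i, ∑ j, |U i j| = (Sᴴ * U).trace := by
  refine ⟨of fun i j ↦ if 0 ≤ U i j then 1 else -1,
    fun i j ↦ by dsimp only [of_apply]; split_ifs <;> norm_num, ?_⟩
  simp only [trace, diag, mul_apply, conjTranspose_apply, of_apply, star_trivial]
  rw [Finset.sum_comm]
  refine Finset.sum_congr rfl fun i _ ↦ Finset.sum_congr rfl fun j _ ↦ ?_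
  split_ifs with h
  · simp [abs_of_nonneg h]
  · simp [abs_of_neg (not_le.mp h)]

end NuclearNormBound

theorem conjTranspose_mul_self_apply_self {m n : Type*} [Fintype m] {S : Matrix m n ℝ}
    (hS : ∀ i j, S i j ^ 2 = 1) (j : n) : (Sᴴ * S) j j = Fintype.card m := by
  simp [mul_apply, ← sq, hS]

theorem one_le_sq_conjTranspose_mul_self_apply {S : Matrix (Fin 3) (Fin 3) ℝ}
    (hS : ∀ i j, S i j ^ 2 = 1) (i j : Fin 3) : 1 ≤ (Sᴴ * S) i j ^ 2 := by
  simp only [mul_apply, conjTranspose_apply, star_trivial, Fin.sum_univ_three]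
  exact one_le_sq_add_add (by simp [mul_pow, hS]) (by simp [mul_pow, hS]) (by simp [mul_pow, hS])

theorem thirty_three_le_trace_mul_self {A : Matrix (Fin 3) (Fin 3) ℝ} (hA : A.IsSymm)
    (hdiag : ∀ i, A i i = 3) (hoff : ∀ i j, 1 ≤ A i j ^ 2) : 33 ≤ (A * A).trace := by
  have htrace : (A * A).trace = ∑ i, ∑ j, A i j ^ 2 := by
    simp only [trace, diag_apply, mul_apply]
    refine Finset.sum_congr rfl fun i _ ↦ Finset.sum_congr rfl fun j _ ↦ ?_
    rw [hA.apply i j, sq]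
  simp only [htrace, Fin.sum_univ_three, hdiag]
  linarith [hoff 0 1, hoff 0 2, hoff 1 0, hoff 1 2, hoff 2 0, hoff 2 1]

theorem sq_det_le_sixteen {S : Matrix (Fin 3) (Fin 3) ℝ} (hS : ∀ i j, S i j ^ 2 = 1) :
    S.det ^ 2 ≤ 16 := by
  have hsq (i j k : Fin 3) : (S 0 i * S 1 j * S 2 k) ^ 2 = 1 := by simp [mul_pow, hS]
  have hnsq (i j k : Fin 3) : (-(S 0 i * S 1 j * S 2 k)) ^ 2 = 1 := by simp [mul_pow, hS]
  rw [det_fin_three]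
  -- each entry occurs in exactly two of the six terms, so their product is `-∏ S i j ^ 2 = -1`
  convert sq_add_six_le_sixteen (hsq 0 1 2) (hnsq 0 2 1) (hnsq 1 0 2) (hsq 1 2 0) (hsq 2 0 1)
    (hnsq 2 1 0) ?_ using 2
  · ring
  · ring_nf; simp [hS]

theorem sum_sqrt_eigenvalues_conjTranspose_mul_self_le_five {S : Matrix (Fin 3) (Fin 3) ℝ}
    (hS : ∀ i j, S i j ^ 2 = 1) :
    ∑ i, √((isHermitian_conjTranspose_mul_self S).eigenvalues i) ≤ 5 := by
  have hA := isHermitian_conjTranspose_mul_self S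
  have hdiag (i : Fin 3) : (Sᴴ * S) i i = 3 :=
    (conjTranspose_mul_self_apply_self hS i).trans (by norm_num)
  have hnonneg := (posSemidef_conjTranspose_mul_self S).eigenvalues_nonneg
  have hsum : ∑ i, hA.eigenvalues i = 9 := by
    have h := hA.trace_eq_sum_eigenvalues
    simp only [trace, diag_apply, hdiag, RCLike.ofReal_real_eq_id, id] at h
    norm_num at h
    exact h.symm
  have hsq : 33 ≤ ∑ i, hA.eigenvalues i ^ 2 := by
    have h := hA.trace_mul_self_eq_sum_sq_eigenvalues
    simp only [RCLike.ofReal_real_eq_id, id] at h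
    rw [← h]
    exact thirty_three_le_trace_mul_self (isHermitian_iff_isSymm.mp hA) hdiag
      (one_le_sq_conjTranspose_mul_self_apply hS)
  have hprod : ∏ i, hA.eigenvalues i ≤ 16 := by
    have h := hA.det_eq_prod_eigenvalues
    simp only [RCLike.ofReal_real_eq_id, id, det_mul, det_conjTranspose, star_trivial] at h
    rw [← h, ← sq]
    exact sq_det_le_sixteen hS
  rw [Fin.sum_univ_three] at hsum hsq ⊢
  rw [Fin.prod_univ_three] at hprod
  exact sqrt_add_sqrt_add_sqrt_le_five (hnonneg 0) (hnonneg 1) (hnonneg 2) hsum hsq hprod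

theorem sum_abs_le_five_of_mul_transpose_eq_one {U : Matrix (Fin 3) (Fin 3) ℝ}
    (hU : U * Uᵀ = 1) : ∑ i, ∑ j, |U i j| ≤ 5 := by
  obtain ⟨S, hS, hsum⟩ := exists_sign_matrix_sum_abs_eq_trace U
  have hU' : Uᴴ * U = 1 := by
    rw [conjTranspose_eq_transpose_of_trivial]; exact mul_eq_one_comm.mp hU
  calc ∑ i, ∑ j, |U i j| = (Sᴴ * U).trace := hsum
    _ ≤ _ := trace_conjTranspose_mul_le_sum_sqrt_eigenvalues hU'
    _ ≤ 5 := sum_sqrt_eigenvalues_conjTranspose_mul_self_le_five hS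

end Matrix

lemma matrixA_mul_transpose : matrixA * matrixAᵀ = 1 := by
  ext i j
  fin_cases i <;> fin_cases j <;> simp [matrixA, mul_apply, Fin.sum_univ_three, one_apply] <;>
    norm_num

lemma sum_abs_matrixA : ∑ i, ∑ j, |matrixA i j| = 5 := by
  simp [matrixA, Fin.sum_univ_three]
  norm_num [abs_of_nonneg, abs_of_nonpos]

/-- The supremum of the 1-norm over `O(3)` equals `5`, and it is attained by the
orthogonal matrix `A = (1/3)·[[1,2,2],[2,1,−2],[−2,2,−1]]`, which satisfies `‖A‖₁ = 5`. -/
theorem sSup_norm1_orthogonal_three :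
    sSup {x : ℝ | ∃ U : Matrix (Fin 3) (Fin 3) ℝ, U * Uᵀ = 1 ∧ x = ∑ i, ∑ j, |U i j|} = 5 ∧
    matrixA * matrixAᵀ = 1 ∧
    (∑ i, ∑ j, |matrixA i j|) = 5 := by
  refine ⟨IsGreatest.csSup_eq ⟨⟨matrixA, matrixA_mul_transpose, sum_abs_matrixA.symm⟩, ?_⟩,
    matrixA_mul_transpose, sum_abs_matrixA⟩
  rintro x ⟨U, hU, rfl⟩
  exact sum_abs_le_five_of_mul_transpose_eq_one hU
end

section
/- If U ∈ O(N) is a local maximizer of the 1-norm on O(N) (i.e., there is a neighborhood of U in O(N) on which ||·||₁ attains its maximum at U), then U_{ij} ≠ 0 for all indices i, j. -/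
/-!
If `U p q = 0`, pick `r` with `U r q ≠ 0` and rotate rows `p` and `r` of `U` by the angles `±θ`;
both rotated matrices stay orthogonal. By the triangle inequality their 1-norms add up to at least
`2 |cos θ| ‖U‖₁`, and the entry `(p, q)` contributes an extra `2 |sin θ| |U r q|`. This gain is of
first order in `θ`, while the loss `2 (1 - |cos θ|) ‖U‖₁` is of second order, so for small `θ > 0`
one of the two rotations has a larger 1-norm than `U`.
-/

open Matrix

def matrixNorm1 {n : Type*} [Fintype n] (U : Matrix n n ℝ) : ℝ :=
  ∑ i, ∑ j, |U i j|

open Filter Topology Real Finset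

namespace Matrix

section RotateRows

variable {m n : Type*} [DecidableEq m]

noncomputable def rotateRows (U : Matrix m n ℝ) (p r : m) (θ : ℝ) : Matrix m n ℝ :=
  (U.updateRow p (cos θ • U p - sin θ • U r)).updateRow r (sin θ • U p + cos θ • U r)

variable {U : Matrix m n ℝ} {p r : m}

theorem rotateRows_apply_left (hpr : p ≠ r) (θ : ℝ) (j : n) :
    rotateRows U p r θ p j = cos θ * U p j - sin θ * U r j := by
  simp [rotateRows, updateRow_ne hpr]

theorem rotateRows_apply_right (θ : ℝ) (j : n) :
    rotateRows U p r θ r j = sin θ * U p j + cos θ * U r j := by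
  simp [rotateRows]

theorem rotateRows_apply_of_ne {i : m} (hip : i ≠ p) (hir : i ≠ r) (θ : ℝ) (j : n) :
    rotateRows U p r θ i j = U i j := by
  simp [rotateRows, updateRow_ne hip, updateRow_ne hir]

@[simp]
theorem rotateRows_zero : rotateRows U p r 0 = U := by
  simp [rotateRows, updateRow_eq_self]

theorem continuous_rotateRows : Continuous (rotateRows U p r) := by
  unfold rotateRows
  fun_prop

theorem rotateRows_mul_transpose_self [Fintype n] (hU : U * Uᵀ = 1) (hpr : p ≠ r) (θ : ℝ) :
    rotateRows U p r θ * (rotateRows U p r θ)ᵀ = 1 := by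
  have hdot : ∀ i k, U i ⬝ᵥ U k = if i = k then 1 else 0 := fun i k => by
    rw [← one_apply, ← hU]; rfl
  have hrow : ∀ i, rotateRows U p r θ i = if i = r then sin θ • U p + cos θ • U r
      else if i = p then cos θ • U p - sin θ • U r else U i := fun i => by
    funext j
    simp only [rotateRows, updateRow_apply]
    split_ifs <;> rfl
  ext i k
  change rotateRows U p r θ i ⬝ᵥ rotateRows U p r θ k = _
  rw [hrow, hrow, one_apply]
  by_cases hir : i = r <;> by_cases hip : i = p <;> by_cases hkr : k = r <;> by_cases hkp : k = p <;>
    simp_all [dotProduct_add, add_dotProduct, dotProduct_sub, sub_dotProduct, Ne.symm hpr] <;>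
    grind [sin_sq_add_cos_sq]

theorem two_mul_abs_cos_mul_abs_le_rotateRows (hpr : p ≠ r) (θ : ℝ) (i : m) (j : n) :
    2 * |cos θ| * |U i j| ≤ |U.rotateRows p r θ i j| + |U.rotateRows p r (-θ) i j| := by
  rcases eq_or_ne i p with rfl | hip
  · rw [rotateRows_apply_left hpr, rotateRows_apply_left hpr, cos_neg, sin_neg]
    calc 2 * |cos θ| * |U i j|
        = |(cos θ * U i j - sin θ * U r j) + (cos θ * U i j - -sin θ * U r j)| := by
          rw [← abs_two, ← abs_mul, ← abs_mul]; ring_nf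
      _ ≤ _ := abs_add_le _ _
  rcases eq_or_ne i r with rfl | hir
  · rw [rotateRows_apply_right, rotateRows_apply_right, cos_neg, sin_neg]
    calc 2 * |cos θ| * |U i j|
        = |(sin θ * U p j + cos θ * U i j) + (-sin θ * U p j + cos θ * U i j)| := by
          rw [← abs_two, ← abs_mul, ← abs_mul]; ring_nf
      _ ≤ _ := abs_add_le _ _
  rw [rotateRows_apply_of_ne hip hir, rotateRows_apply_of_ne hip hir]
  nlinarith [abs_cos_le_one θ, abs_nonneg (U i j)]

theorem tendsto_rotateRows_nhdsWithin [Fintype n] (hU : U * Uᵀ = 1) (hpr : p ≠ r) :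
    Tendsto (rotateRows U p r) (𝓝 0) (𝓝[{W : Matrix m n ℝ | W * Wᵀ = 1}] U) :=
  tendsto_nhdsWithin_iff.2
    ⟨by simpa using continuous_rotateRows.tendsto (0 : ℝ),
      .of_forall fun θ => rotateRows_mul_transpose_self hU hpr θ⟩

end RotateRows

end Matrix

section MatrixNorm1

variable {n : Type*} [Fintype n]

theorem matrixNorm1_nonneg (U : Matrix n n ℝ) : 0 ≤ matrixNorm1 U := by
  unfold matrixNorm1; positivity

variable [DecidableEq n] {U : Matrix n n ℝ} {p r : n}

theorem le_matrixNorm1_rotateRows_add_rotateRows_neg (hpr : p ≠ r) {q : n} (hpq : U p q = 0)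
    (θ : ℝ) :
    2 * |cos θ| * matrixNorm1 U + 2 * |sin θ| * |U r q| ≤
      matrixNorm1 (U.rotateRows p r θ) + matrixNorm1 (U.rotateRows p r (-θ)) := by
  set excess : n → n → ℝ := fun i j =>
    |U.rotateRows p r θ i j| + |U.rotateRows p r (-θ) i j| - 2 * |cos θ| * |U i j|
  have hexcess : ∀ i j, 0 ≤ excess i j := fun i j =>
    sub_nonneg.2 (two_mul_abs_cos_mul_abs_le_rotateRows hpr θ i j)
  have hpq_excess : excess p q = 2 * |sin θ| * |U r q| := by
    simp only [excess, rotateRows_apply_left hpr, hpq, cos_neg, sin_neg, mul_zero, zero_sub,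
      neg_mul, sub_neg_eq_add, zero_add, abs_neg, abs_mul, abs_zero, sub_zero]
    ring
  have hle : excess p q ≤ ∑ i, ∑ j, excess i j :=
    (single_le_sum (fun j _ => hexcess p j) (mem_univ q)).trans
      (single_le_sum (fun i _ => sum_nonneg fun j _ => hexcess i j) (mem_univ p))
  simp only [excess, sum_sub_distrib, sum_add_distrib, ← mul_sum] at hle hpq_excess
  unfold matrixNorm1
  linarith

end MatrixNorm1

theorem nonpos_of_eventually_abs_cos_mul_add_abs_sin_mul_le {M B : ℝ} (hM : 0 ≤ M)
    (h : ∀ᶠ θ in 𝓝 0, |cos θ| * M + |sin θ| * B ≤ M) : B ≤ 0 := by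
  by_contra! hB
  have hsmall : ∀ᶠ θ in 𝓝 0, sin θ * M < B :=
    ((continuous_sin.mul continuous_const).tendsto' 0 0 (by simp)).eventually (gt_mem_nhds hB)
  obtain ⟨θ, ⟨hle, hlt⟩, hθ⟩ :=
    (((h.and hsmall).filter_mono nhdsWithin_le_nhds).and (Ioo_mem_nhdsGT pi_pos)).exists
  have hsin : 0 < sin θ := sin_pos_of_pos_of_lt_pi hθ.1 hθ.2
  have hcos : 1 - |cos θ| ≤ sin θ ^ 2 := by
    nlinarith [sin_sq_add_cos_sq θ, abs_cos_le_one θ, sq_abs (cos θ), abs_nonneg (cos θ)]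
  rw [abs_of_pos hsin] at hle
  nlinarith [mul_le_mul_of_nonneg_right hcos hM]

/-- If `U ∈ O(N)` is a local maximizer of the 1-norm on `O(N)`, then all the
entries of `U` are nonzero. -/
theorem entries_ne_zero_of_isLocalMaxOn_norm1 {N : ℕ}
    (U : Matrix (Fin N) (Fin N) ℝ) (hU : U * Uᵀ = 1)
    (hmax : IsLocalMaxOn matrixNorm1 {W : Matrix (Fin N) (Fin N) ℝ | W * Wᵀ = 1} U) :
    ∀ i j, U i j ≠ 0 := by
  intro p q hpq
  obtain ⟨r, hr⟩ : ∃ r, U r q ≠ 0 := by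
    by_contra! h
    simpa [det_mul, det_eq_zero_of_column_eq_zero q h] using congrArg det hU
  have hpr : p ≠ r := by rintro rfl; exact hr hpq
  have hle : ∀ᶠ θ in 𝓝 0, matrixNorm1 (U.rotateRows p r θ) ≤ matrixNorm1 U :=
    (tendsto_rotateRows_nhdsWithin hU hpr).eventually hmax
  have hle_neg := (continuous_neg.tendsto' (0 : ℝ) 0 neg_zero).eventually hle
  refine (abs_pos.2 hr).not_ge (nonpos_of_eventually_abs_cos_mul_add_abs_sin_mul_le
    (matrixNorm1_nonneg U) ?_)
  filter_upwards [hle, hle_neg] with θ hθ hθ_neg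
  linarith [le_matrixNorm1_rotateRows_add_rotateRows_neg hpr hpq θ]
end

section
/- Every U ∈ O(2) that is a local maximizer of the 1-norm on O(2) satisfies ||U||₁ = 2√2; equivalently, |U_{ij}| = 1/√2 for all i,j, so √2·U is a Hadamard matrix and U is a global maximizer of the 1-norm on O(2). -/
open Matrix

/-!
Right multiplication by a rotation `R t` preserves `O(2)`, and the second row of `U ∈ O(2)` is
`±` its first row `(a, b)` turned by a quarter turn, so `‖U R t‖₁ = 2 (|a cos t - b sin t| +
|a sin t + b cos t|)`. With signs `εa, εb = ±1` such that `εa a = |a|` and `εb b = |b|`, the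
function `εa (a cos t - b sin t) + εb (a sin t + b cos t)` is a smooth minorant touching this
at `t = 0`, so at a local maximum its derivative `εb a - εa b` vanishes, whence
`|a| = |b| = 1/√2`. Global maximality is Cauchy–Schwarz row by row: `‖W‖₁ ≤ N √N` on `O(N)`.
-/

open Real

theorem mul_mul_transpose_eq_one {n : Type*} [Fintype n] [DecidableEq n]
    {A B : Matrix n n ℝ} (hA : A * Aᵀ = 1) (hB : B * Bᵀ = 1) : (A * B) * (A * B)ᵀ = 1 := by
  rw [transpose_mul, Matrix.mul_assoc, ← Matrix.mul_assoc B, hB, Matrix.one_mul, hA]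

theorem sum_sq_eq_one_of_mul_transpose_eq_one {n : Type*} [Fintype n] [DecidableEq n]
    {W : Matrix n n ℝ} (hW : W * Wᵀ = 1) (i : n) : ∑ j, W i j ^ 2 = 1 := by
  simpa [mul_apply, sq] using congrFun (congrFun hW i) i

theorem matrixNorm1_le_of_mul_transpose_eq_one {n : Type*} [Fintype n] [DecidableEq n]
    {W : Matrix n n ℝ} (hW : W * Wᵀ = 1) :
    matrixNorm1 W ≤ Fintype.card n * √(Fintype.card n) := by
  have hrow (i : n) : ∑ j, |W i j| ≤ √(Fintype.card n) := by
    refine Real.le_sqrt_of_sq_le ?_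
    calc (∑ j, |W i j|) ^ 2 ≤ Fintype.card n * ∑ j, |W i j| ^ 2 := sq_sum_le_card_mul_sum_sq
      _ = Fintype.card n := by simp [sq_abs, sum_sq_eq_one_of_mul_transpose_eq_one hW i]
  calc matrixNorm1 W ≤ ∑ _i : n, √(Fintype.card n) := Finset.sum_le_sum fun i _ => hrow i
    _ = Fintype.card n * √(Fintype.card n) := by simp

theorem matrixNorm1_eq_of_forall_abs_eq {n : Type*} [Fintype n] {U : Matrix n n ℝ} {c : ℝ}
    (h : ∀ i j, |U i j| = c) : matrixNorm1 U = Fintype.card n ^ 2 * c := by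
  simp [matrixNorm1, h, sq, mul_assoc]

theorem isHadamard_sqrt_smul {N : ℕ} {U : Matrix (Fin N) (Fin N) ℝ} (hU : U * Uᵀ = 1)
    (habs : ∀ i j, |U i j| = 1 / √N) : _root_.IsHadamard (√N • U) := by
  refine ⟨fun i j => ?_, fun i j hij => ?_⟩
  · have hN : (0 : ℝ) < √N := Real.sqrt_pos.2 (by exact_mod_cast i.pos)
    refine (abs_eq zero_le_one).1 ?_
    rw [Matrix.smul_apply, smul_eq_mul, abs_mul, habs, abs_of_pos hN]
    field_simp
  · have h := congrFun (congrFun hU i) j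
    rw [mul_apply, one_apply_ne hij] at h
    simp only [Matrix.smul_apply, smul_eq_mul, transpose_apply] at h ⊢
    calc ∑ k, √N * U i k * (√N * U j k) = (√N * √N) * ∑ k, U i k * U j k := by
          rw [Finset.mul_sum]; exact Finset.sum_congr rfl fun k _ => by ring
      _ = 0 := by rw [h, mul_zero]

theorem abs_eq_abs_of_orthonormal {a b c d : ℝ} (h₁ : a ^ 2 + b ^ 2 = 1) (h₂ : a * c + b * d = 0)
    (h₃ : c ^ 2 + d ^ 2 = 1) : |c| = |b| ∧ |d| = |a| := by
  constructor <;> refine sq_eq_sq_iff_abs_eq_abs _ _ |>.1 ?_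
  · linear_combination (a * c - b * d) * h₂ - c ^ 2 * h₁ + b ^ 2 * h₃
  · linear_combination (b * d - a * c) * h₂ - d ^ 2 * h₁ + a ^ 2 * h₃

theorem abs_apply_fin_two_of_mul_transpose_eq_one {W : Matrix (Fin 2) (Fin 2) ℝ} (hW : W * Wᵀ = 1) :
    |W 1 0| = |W 0 1| ∧ |W 1 1| = |W 0 0| := by
  have h₂ : W 0 0 * W 1 0 + W 0 1 * W 1 1 = 0 := by
    simpa [mul_apply, Fin.sum_univ_two] using congrFun (congrFun hW 0) 1
  refine abs_eq_abs_of_orthonormal ?_ h₂ ?_ <;>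
    simpa [Fin.sum_univ_two] using sum_sq_eq_one_of_mul_transpose_eq_one hW _

theorem matrixNorm1_fin_two_of_mul_transpose_eq_one {W : Matrix (Fin 2) (Fin 2) ℝ}
    (hW : W * Wᵀ = 1) : matrixNorm1 W = 2 * (|W 0 0| + |W 0 1|) := by
  obtain ⟨h₁₀, h₁₁⟩ := abs_apply_fin_two_of_mul_transpose_eq_one hW
  simp only [matrixNorm1, Fin.sum_univ_two, h₁₀, h₁₁]
  ring

theorem abs_eq_inv_sqrt_two {a b : ℝ} (h : a ^ 2 + b ^ 2 = 1) (hab : |a| = |b|) :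
    |a| = 1 / √2 := by
  have hb : b ^ 2 = a ^ 2 := by rw [← sq_abs b, ← hab, sq_abs]
  have ha : |a| ^ 2 = 1 / 2 := by rw [sq_abs]; linarith
  rw [← Real.sqrt_sq (abs_nonneg a), ha, Real.sqrt_div' _ zero_le_two, Real.sqrt_one]

noncomputable def rotationMatrix (t : ℝ) : Matrix (Fin 2) (Fin 2) ℝ :=
  !![cos t, sin t; -sin t, cos t]

theorem rotationMatrix_zero : rotationMatrix 0 = 1 := by
  simp [rotationMatrix, one_fin_two]

theorem rotationMatrix_mul_transpose (t : ℝ) : rotationMatrix t * (rotationMatrix t)ᵀ = 1 := by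
  have := sin_sq_add_cos_sq t
  ext i j
  fin_cases i <;> fin_cases j <;> simp [rotationMatrix, mul_apply, Fin.sum_univ_two] <;> linarith

theorem continuous_rotationMatrix : Continuous rotationMatrix := by
  refine continuous_matrix fun i j => ?_
  fin_cases i <;> fin_cases j <;> simp [rotationMatrix] <;> fun_prop

theorem exists_abs_eq_one_mul_eq_abs {R : Type*} [Ring R] [LinearOrder R] [IsOrderedRing R]
    (x : R) : ∃ ε : R, |ε| = 1 ∧ ε * x = |x| := by
  rcases le_total 0 x with hx | hx
  · exact ⟨1, by simp, by simp [abs_of_nonneg hx]⟩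
  · exact ⟨-1, by simp, by simp [abs_of_nonpos hx]⟩

theorem abs_eq_abs_of_isLocalMax_rotate_norm1 {a b : ℝ}
    (h : IsLocalMax (fun t => |a * cos t - b * sin t| + |a * sin t + b * cos t|) 0) :
    |a| = |b| := by
  obtain ⟨εa, hεa, hεaa⟩ := exists_abs_eq_one_mul_eq_abs a
  obtain ⟨εb, hεb, hεbb⟩ := exists_abs_eq_one_mul_eq_abs b
  have le_abs {ε : ℝ} (hε : |ε| = 1) (y : ℝ) : ε * y ≤ |y| :=
    (le_abs_self _).trans_eq (by rw [abs_mul, hε, one_mul])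
  set g : ℝ → ℝ := fun t => εa * (a * cos t - b * sin t) + εb * (a * sin t + b * cos t)
  have hg : IsLocalMax g 0 := by
    filter_upwards [h] with t ht
    calc g t ≤ |a * cos t - b * sin t| + |a * sin t + b * cos t| :=
          add_le_add (le_abs hεa _) (le_abs hεb _)
      _ ≤ |a| + |b| := by simpa using ht
      _ = g 0 := by simp [g, hεaa, hεbb]
  have hderiv : HasDerivAt g (εb * a - εa * b) 0 := by
    refine (((((hasDerivAt_cos 0).const_mul a).sub ((hasDerivAt_sin 0).const_mul b)).const_mul
      εa).add ((((hasDerivAt_sin 0).const_mul a).add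
        ((hasDerivAt_cos 0).const_mul b)).const_mul εb)).congr_deriv ?_
    simp only [sin_zero, cos_zero]
    ring
  have hcrit : εb * a = εa * b := sub_eq_zero.1 (hg.hasDerivAt_eq_zero hderiv)
  calc |a| = |εb * a| := by rw [abs_mul, hεb, one_mul]
    _ = |b| := by rw [hcrit, abs_mul, hεa, one_mul]

theorem abs_apply_zero_zero_eq_of_isLocalMaxOn {U : Matrix (Fin 2) (Fin 2) ℝ} (hU : U * Uᵀ = 1)
    (hmax : IsLocalMaxOn matrixNorm1 {W : Matrix (Fin 2) (Fin 2) ℝ | W * Wᵀ = 1} U) :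
    |U 0 0| = |U 0 1| := by
  have hmem (t : ℝ) : U * rotationMatrix t * (U * rotationMatrix t)ᵀ = 1 :=
    mul_mul_transpose_eq_one hU (rotationMatrix_mul_transpose t)
  have hcurve : IsLocalMax (fun t => matrixNorm1 (U * rotationMatrix t)) 0 := by
    have h₀ : IsLocalMaxOn matrixNorm1 {W | W * Wᵀ = 1} (U * rotationMatrix 0) := by
      rwa [rotationMatrix_zero, Matrix.mul_one]
    exact isLocalMaxOn_univ_iff.1 <| h₀.comp_continuousOn (g := (U * rotationMatrix ·))
      (fun t _ => hmem t)
      (continuous_const.mul continuous_rotationMatrix).continuousOn (Set.mem_univ 0)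
  apply abs_eq_abs_of_isLocalMax_rotate_norm1
  filter_upwards [hcurve] with t ht
  rw [matrixNorm1_fin_two_of_mul_transpose_eq_one (hmem t),
    matrixNorm1_fin_two_of_mul_transpose_eq_one (hmem 0)] at ht
  simpa [rotationMatrix, mul_apply, Fin.sum_univ_two, ← sub_eq_add_neg, mul_comm] using ht

/-- Every local maximizer `U` of the 1-norm on `O(2)` satisfies `‖U‖₁ = 2√2`;
equivalently `|Uᵢⱼ| = 1/√2` for all `i, j`, so `√2·U` is Hadamard and `U` is a
global maximizer of the 1-norm on `O(2)`. -/
theorem isLocalMaxOn_norm1_two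
    (U : Matrix (Fin 2) (Fin 2) ℝ) (hU : U * Uᵀ = 1)
    (hmax : IsLocalMaxOn matrixNorm1 {W : Matrix (Fin 2) (Fin 2) ℝ | W * Wᵀ = 1} U) :
    matrixNorm1 U = 2 * Real.sqrt 2 ∧
    (∀ i j, |U i j| = 1 / Real.sqrt 2) ∧
    _root_.IsHadamard (Real.sqrt 2 • U) ∧
    ∀ W : Matrix (Fin 2) (Fin 2) ℝ, W * Wᵀ = 1 → matrixNorm1 W ≤ matrixNorm1 U := by
  have hrow := abs_apply_zero_zero_eq_of_isLocalMaxOn hU hmax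
  have h₀₀ : |U 0 0| = 1 / √2 := abs_eq_inv_sqrt_two
    (by simpa [Fin.sum_univ_two] using sum_sq_eq_one_of_mul_transpose_eq_one hU 0) hrow
  have h₀₁ : |U 0 1| = 1 / √2 := hrow.symm.trans h₀₀
  obtain ⟨h₁₀, h₁₁⟩ := abs_apply_fin_two_of_mul_transpose_eq_one hU
  have habs : ∀ i j, |U i j| = 1 / √2 := by
    simp only [Fin.forall_fin_two]
    exact ⟨⟨h₀₀, h₀₁⟩, h₁₀.trans h₀₁, h₁₁.trans h₀₀⟩
  have hnorm : matrixNorm1 U = 2 * √2 := by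
    rw [matrixNorm1_eq_of_forall_abs_eq habs]
    field_simp
    norm_num
  refine ⟨hnorm, habs, isHadamard_sqrt_smul hU (by exact_mod_cast habs), fun W hW => ?_⟩
  simpa [hnorm] using matrixNorm1_le_of_mul_transpose_eq_one hW
end

section
/- Assume that for every positive integer M divisible by 4 there exists a Hadamard matrix of order M. Then for every N ≥ 1, the quantity K_N = sup_{U ∈ O(N)} ||U||₁ satisfies K_N ≥ (N − 4.5)·√N. -/
/-!
Scale a Hadamard matrix of order `M = 4 ⌊N / 4⌋` by `1 / √M` to get an orthogonal matrix
with `‖·‖₁ = M √M`, and complete it to an orthogonal `N × N` matrix by an identity block of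
size `N - M ≤ 3`. Since `x ↦ x √x` is increasing and
`(N - 3)³ - N (N - 4.5)² = 6.75 N - 27 ≥ 0` for `N ≥ 4`, this gives `M √M ≥ (N - 4.5) √N`.
For `N < 4` we have `M = 0`, and the empty matrix is a Hadamard matrix of order `0`.
-/

open Matrix

namespace Matrix

variable {l m n p : Type*} [Fintype l] [Fintype m] [Fintype n] [Fintype p]

def entrywiseNorm1 (A : Matrix m n ℝ) : ℝ := ∑ i, ∑ j, |A i j|

theorem entrywiseNorm1_smul (c : ℝ) (A : Matrix m n ℝ) :
    entrywiseNorm1 (c • A) = |c| * entrywiseNorm1 A := by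
  simp only [entrywiseNorm1, smul_apply, smul_eq_mul, abs_mul, Finset.mul_sum]

theorem entrywiseNorm1_submatrix_equiv (A : Matrix m n ℝ) (e₁ : l ≃ m) (e₂ : p ≃ n) :
    entrywiseNorm1 (A.submatrix e₁ e₂) = entrywiseNorm1 A :=
  Fintype.sum_equiv e₁ _ _ fun _ => Fintype.sum_equiv e₂ _ _ fun _ => rfl

theorem entrywiseNorm1_fromBlocks (A : Matrix n l ℝ) (B : Matrix n m ℝ) (C : Matrix p l ℝ)
    (D : Matrix p m ℝ) :
    entrywiseNorm1 (fromBlocks A B C D) =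
      entrywiseNorm1 A + entrywiseNorm1 B + (entrywiseNorm1 C + entrywiseNorm1 D) := by
  simp only [entrywiseNorm1, Fintype.sum_sum_type, fromBlocks_apply₁₁, fromBlocks_apply₁₂,
    fromBlocks_apply₂₁, fromBlocks_apply₂₂, Finset.sum_add_distrib]
  ring

theorem entrywiseNorm1_one [DecidableEq n] :
    entrywiseNorm1 (1 : Matrix n n ℝ) = Fintype.card n := by
  simp [entrywiseNorm1, one_apply, apply_ite abs]

theorem abs_apply_le_one_of_mul_transpose_eq_one [DecidableEq n] {U : Matrix n n ℝ}
    (hU : U * Uᵀ = 1) (i j : n) : |U i j| ≤ 1 := by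
  have hrow : ∑ k, U i k ^ 2 = 1 := by
    simpa [mul_apply, sq] using congrFun (congrFun hU i) i
  have hentry : U i j ^ 2 ≤ 1 :=
    hrow ▸ Finset.single_le_sum (fun k _ => sq_nonneg (U i k)) (Finset.mem_univ j)
  exact (sq_le_one_iff_abs_le_one _).mp hentry

theorem entrywiseNorm1_le_of_mul_transpose_eq_one [DecidableEq n] {U : Matrix n n ℝ}
    (hU : U * Uᵀ = 1) :
    entrywiseNorm1 U ≤ Fintype.card n ^ 2 := by
  calc entrywiseNorm1 U ≤ ∑ _i : n, ∑ _j : n, (1 : ℝ) :=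
        Finset.sum_le_sum fun i _ => Finset.sum_le_sum fun j _ =>
          abs_apply_le_one_of_mul_transpose_eq_one hU i j
    _ = Fintype.card n ^ 2 := by simp [sq]

theorem bddAbove_entrywiseNorm1_orthogonal [DecidableEq n] :
    BddAbove {x : ℝ | ∃ U : Matrix n n ℝ, U * Uᵀ = 1 ∧ x = ∑ i, ∑ j, |U i j|} := by
  refine ⟨Fintype.card n ^ 2, ?_⟩
  rintro x ⟨U, hU, rfl⟩
  exact entrywiseNorm1_le_of_mul_transpose_eq_one hU

theorem entrywiseNorm1_le_sSup [DecidableEq n] {U : Matrix n n ℝ} (hU : U * Uᵀ = 1) :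
    entrywiseNorm1 U ≤
      sSup {x : ℝ | ∃ V : Matrix n n ℝ, V * Vᵀ = 1 ∧ x = ∑ i, ∑ j, |V i j|} :=
  le_csSup bddAbove_entrywiseNorm1_orthogonal ⟨U, hU, rfl⟩

theorem fromBlocks_one_mul_transpose [DecidableEq m] [DecidableEq p] {A : Matrix m m ℝ}
    (hA : A * Aᵀ = 1) :
    fromBlocks A 0 0 (1 : Matrix p p ℝ) * (fromBlocks A 0 0 (1 : Matrix p p ℝ))ᵀ = 1 := by
  simp [fromBlocks_transpose, fromBlocks_multiply, hA, fromBlocks_one]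

theorem submatrix_equiv_mul_transpose [DecidableEq m] [DecidableEq n] {A : Matrix m m ℝ}
    (hA : A * Aᵀ = 1) (e : n ≃ m) : A.submatrix e e * (A.submatrix e e)ᵀ = 1 := by
  rw [transpose_submatrix, submatrix_mul_equiv, hA, submatrix_one_equiv]

theorem exists_orthogonal_entrywiseNorm1_eq_add {M N : ℕ} (hMN : M ≤ N)
    {A : Matrix (Fin M) (Fin M) ℝ} (hA : A * Aᵀ = 1) :
    ∃ U : Matrix (Fin N) (Fin N) ℝ, U * Uᵀ = 1 ∧
      entrywiseNorm1 U = entrywiseNorm1 A + (N - M : ℕ) := by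
  let e : Fin N ≃ Fin M ⊕ Fin (N - M) :=
    (finCongr (Nat.add_sub_cancel' hMN).symm).trans finSumFinEquiv.symm
  let B := fromBlocks A 0 0 (1 : Matrix (Fin (N - M)) (Fin (N - M)) ℝ)
  refine ⟨B.submatrix e e,
    submatrix_equiv_mul_transpose (fromBlocks_one_mul_transpose hA) e, ?_⟩
  rw [entrywiseNorm1_submatrix_equiv, entrywiseNorm1_fromBlocks, entrywiseNorm1_one]
  simp [entrywiseNorm1]

end Matrix

namespace IsHadamard

variable {N : ℕ} {H : Matrix (Fin N) (Fin N) ℝ}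

theorem of_fin_zero (H : Matrix (Fin 0) (Fin 0) ℝ) : _root_.IsHadamard H :=
  ⟨fun i => i.elim0, fun i => i.elim0⟩

theorem mul_transpose_self (hH : _root_.IsHadamard H) : H * Hᵀ = (N : ℝ) • 1 := by
  ext i j
  simp only [mul_apply, transpose_apply, Matrix.smul_apply, one_apply, smul_eq_mul]
  by_cases hij : i = j
  · subst hij
    have hsq : ∀ k, H i k * H i k = 1 := fun k => by
      rcases hH.1 i k with h | h <;> simp [h]
    simp [hsq]
  · simp [hH.2 i j hij, hij]

theorem entrywiseNorm1_eq (hH : _root_.IsHadamard H) : entrywiseNorm1 H = N ^ 2 := by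
  have habs : ∀ i j, |H i j| = 1 := fun i j => by
    rcases hH.1 i j with h | h <;> simp [h]
  simp [entrywiseNorm1, habs, sq]

theorem inv_sqrt_smul_mul_transpose (hH : _root_.IsHadamard H) :
    ((√N)⁻¹ • H) * ((√N)⁻¹ • H)ᵀ = 1 := by
  rcases N.eq_zero_or_pos with rfl | hN
  · exact Subsingleton.elim _ _
  have hscale : (√N)⁻¹ * (√N)⁻¹ * (N : ℝ) = 1 := by
    rw [← mul_inv, Real.mul_self_sqrt N.cast_nonneg, inv_mul_cancel₀ (by positivity)]
  rw [transpose_smul, smul_mul, Matrix.mul_smul, hH.mul_transpose_self, smul_smul, smul_smul,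
    hscale, one_smul]

theorem entrywiseNorm1_inv_sqrt_smul (hH : _root_.IsHadamard H) :
    entrywiseNorm1 ((√N)⁻¹ • H) = N * √N := by
  rw [entrywiseNorm1_smul, hH.entrywiseNorm1_eq, abs_of_nonneg (by positivity), sq,
    inv_mul_eq_div, mul_div_assoc, Real.div_sqrt]

end IsHadamard

theorem sub_mul_sqrt_le_mul_sqrt {x y : ℝ} (hy : 0 ≤ y) (hxy : x - 3 ≤ y) :
    (x - 4.5) * √x ≤ y * √y := by
  by_cases hx : x ≤ 4.5
  · exact (mul_nonpos_of_nonpos_of_nonneg (by linarith) (Real.sqrt_nonneg x)).trans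
      (by positivity)
  push Not at hx
  have hcube : ((x - 4.5) * √x) ^ 2 ≤ ((x - 3) * √(x - 3)) ^ 2 := by
    rw [mul_pow, mul_pow, Real.sq_sqrt (by linarith), Real.sq_sqrt (by linarith)]
    nlinarith
  calc (x - 4.5) * √x ≤ (x - 3) * √(x - 3) :=
        (pow_le_pow_iff_left₀ (by positivity) (mul_nonneg (by linarith) (by positivity))
          two_ne_zero).mp hcube
    _ ≤ y * √y := mul_le_mul hxy (Real.sqrt_le_sqrt hxy) (by positivity) hy

/-- If the Hadamard conjecture holds (for every positive multiple `M` of `4` there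
exists a Hadamard matrix of order `M`), then for every `N ≥ 1` the supremum
`K_N = sup_{U ∈ O(N)} ‖U‖₁` satisfies `K_N ≥ (N − 4.5)·√N`. -/
theorem sSup_norm1_ge_of_hadamard_conjecture
    (hHC : ∀ M : ℕ, 0 < M → 4 ∣ M → ∃ H : Matrix (Fin M) (Fin M) ℝ, _root_.IsHadamard H) :
    ∀ N : ℕ, 1 ≤ N →
      ((N : ℝ) - 4.5) * Real.sqrt N ≤
        sSup {x : ℝ | ∃ U : Matrix (Fin N) (Fin N) ℝ,
          U * Uᵀ = 1 ∧ x = ∑ i, ∑ j, |U i j|} := by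
  intro N _
  set M := 4 * (N / 4)
  obtain ⟨H, hH⟩ : ∃ H : Matrix (Fin M) (Fin M) ℝ, _root_.IsHadamard H := by
    rcases M.eq_zero_or_pos with hM0 | hMpos
    · rw [hM0]
      exact ⟨0, IsHadamard.of_fin_zero 0⟩
    · exact hHC M hMpos (dvd_mul_right 4 _)
  obtain ⟨U, hU, hUnorm⟩ :=
    exists_orthogonal_entrywiseNorm1_eq_add (by omega : M ≤ N) hH.inv_sqrt_smul_mul_transpose
  have hNM : (N : ℝ) - 3 ≤ M := by
    rw [sub_le_iff_le_add]
    exact_mod_cast (by omega : N ≤ M + 3)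
  calc ((N : ℝ) - 4.5) * √N ≤ M * √M := sub_mul_sqrt_le_mul_sqrt M.cast_nonneg hNM
    _ ≤ entrywiseNorm1 U := by
      rw [hUnorm, hH.entrywiseNorm1_inv_sqrt_smul]
      exact le_add_of_nonneg_right (Nat.cast_nonneg _)
    _ ≤ _ := entrywiseNorm1_le_sSup hU
end

section
/- Let N be even and U ∈ O(N). Let S ∈ M_N(ℝ) be a matrix with all entries in {−1,1} such that S_{ij}·U_{ij} = |U_{ij}| for all i,j, and suppose S is not a Hadamard matrix (i.e., S has two distinct rows that are not orthogonal). Then ||U||₁ ≤ N√N − 1/(N√N). -/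
/-!
Write `sᵢ` and `uᵢ` for the rows of `S` and `U`, so that the `i`-th row sum of `|U|` is
`⟪sᵢ, uᵢ⟫ ≤ ‖sᵢ‖ ‖uᵢ‖ = √N` by Cauchy–Schwarz. For two rows with `t = ⟪sᵢ, sⱼ⟫ ≠ 0`,
polarization `2(⟪sᵢ, uᵢ⟫ + ⟪sⱼ, uⱼ⟫) = ⟪sᵢ + sⱼ, uᵢ + uⱼ⟫ + ⟪sᵢ - sⱼ, uᵢ - uⱼ⟫` and
Cauchy–Schwarz on each term give the sharper bound `√(N + t) + √(N - t)` for those two rows.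
Since `N` is even, `t ≡ N ≡ 0 (mod 2)`, so `|t| ≥ 2`; then
`(√(N + t) + √(N - t))² = 2N + 2√(N² - t²) ≤ 4N - 4/N ≤ (2√N - 1/(N√N))²`.
-/

open Matrix Finset

section

variable {ι : Type*} [Fintype ι]

lemma dotProduct_le_sqrt_mul_sqrt (s u : ι → ℝ) : s ⬝ᵥ u ≤ √(s ⬝ᵥ s) * √(u ⬝ᵥ u) := by
  simpa only [dotProduct, sq] using Real.sum_mul_le_sqrt_mul_sqrt univ s u

lemma dotProduct_add_dotProduct_le {s s' u u' : ι → ℝ} {n : ℝ}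
    (hs : s ⬝ᵥ s = n) (hs' : s' ⬝ᵥ s' = n)
    (hu : u ⬝ᵥ u = 1) (hu' : u' ⬝ᵥ u' = 1) (huu' : u ⬝ᵥ u' = 0) :
    s ⬝ᵥ u + s' ⬝ᵥ u' ≤ √(n + s ⬝ᵥ s') + √(n - s ⬝ᵥ s') := by
  have hpolar : 2 * (s ⬝ᵥ u + s' ⬝ᵥ u') = (s + s') ⬝ᵥ (u + u') + (s - s') ⬝ᵥ (u - u') := by
    simp only [add_dotProduct, dotProduct_add, sub_dotProduct, dotProduct_sub]
    ring
  have hss_add : (s + s') ⬝ᵥ (s + s') = 2 * (n + s ⬝ᵥ s') := by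
    simp only [add_dotProduct, dotProduct_add, hs, hs', dotProduct_comm s' s]
    ring
  have hss_sub : (s - s') ⬝ᵥ (s - s') = 2 * (n - s ⬝ᵥ s') := by
    simp only [sub_dotProduct, dotProduct_sub, hs, hs', dotProduct_comm s' s]
    ring
  have huu_add : (u + u') ⬝ᵥ (u + u') = 2 := by
    simp only [add_dotProduct, dotProduct_add, hu, hu', dotProduct_comm u' u, huu']
    norm_num
  have huu_sub : (u - u') ⬝ᵥ (u - u') = 2 := by
    simp only [sub_dotProduct, dotProduct_sub, hu, hu', dotProduct_comm u' u, huu']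
    norm_num
  have hsqrt_two : √2 * √2 = 2 := Real.mul_self_sqrt zero_le_two
  have h_add := dotProduct_le_sqrt_mul_sqrt (s + s') (u + u')
  have h_sub := dotProduct_le_sqrt_mul_sqrt (s - s') (u - u')
  rw [hss_add, huu_add, Real.sqrt_mul zero_le_two] at h_add
  rw [hss_sub, huu_sub, Real.sqrt_mul zero_le_two] at h_sub
  have hsqrt_two_mul : ∀ x, √2 * x * √2 = 2 * x := fun x => by linear_combination x * hsqrt_two
  rw [hsqrt_two_mul] at h_add h_sub
  linarith

lemma dotProduct_self_of_sign {s : ι → ℝ} (hs : ∀ k, s k = 1 ∨ s k = -1) :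
    s ⬝ᵥ s = Fintype.card ι := by
  have hsq : ∀ k, s k * s k = 1 := fun k => by rcases hs k with h | h <;> simp [h]
  simp [dotProduct, hsq]

lemma sum_eq_two_mul_card_sub_card_of_sign {x : ι → ℝ} (hx : ∀ k, x k = 1 ∨ x k = -1) :
    ∑ k, x k = 2 * #{k | x k = 1} - Fintype.card ι := by
  have hx' : ∀ k, x k = 2 * (if x k = 1 then 1 else 0) - 1 := fun k => by
    rcases hx k with h | h <;> norm_num [h]
  rw [sum_congr rfl fun k _ => hx' k, sum_sub_distrib, ← mul_sum, sum_boole]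
  simp

lemma two_le_abs_sum_of_sign {x : ι → ℝ} (hx : ∀ k, x k = 1 ∨ x k = -1)
    (hι : Even (Fintype.card ι)) (hx₀ : ∑ k, x k ≠ 0) : 2 ≤ |∑ k, x k| := by
  obtain ⟨m, hm⟩ := hι
  set d : ℤ := #{k | x k = 1} - m
  have hsum : ∑ k, x k = 2 * d := by
    rw [sum_eq_two_mul_card_sub_card_of_sign hx, hm]
    push_cast [d]
    ring
  have hd : (1 : ℝ) ≤ |(d : ℝ)| := by
    exact_mod_cast Int.one_le_abs fun h => hx₀ (by simp [hsum, h])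
  rw [hsum, abs_mul, abs_two]
  linarith

lemma abs_sum_le_card_of_sign {x : ι → ℝ} (hx : ∀ k, x k = 1 ∨ x k = -1) :
    |∑ k, x k| ≤ Fintype.card ι := by
  have habs : ∀ k, |x k| = 1 := fun k => by rcases hx k with h | h <;> simp [h]
  simpa [habs] using abs_sum_le_sum_abs x univ

lemma sum_le_card_mul_sub_of_pair_le {f : ι → ℝ} {c ε : ℝ} (hf : ∀ k, f k ≤ c)
    {i j : ι} (hij : i ≠ j) (hpair : f i + f j ≤ 2 * c - ε) :
    ∑ k, f k ≤ Fintype.card ι * c - ε := by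
  have := add_le_sum (f := fun k => c - f k) (fun k _ => sub_nonneg.2 (hf k))
    (mem_univ i) (mem_univ j) hij
  simp only [sum_sub_distrib, sum_const, card_univ, nsmul_eq_mul] at this
  linarith

end

lemma sqrt_add_add_sqrt_sub_le_sqrt_four_mul_sub {n t : ℝ} (ht : 2 ≤ |t|) (htn : |t| ≤ n) :
    √(n + t) + √(n - t) ≤ √(4 * n - 4 / n) := by
  obtain ⟨ht_lo, ht_hi⟩ := abs_le.mp htn
  have hn : 2 ≤ n := ht.trans htn
  have htwo_div : 2 / n ≤ n := by
    rw [div_le_iff₀ (by linarith)]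
    nlinarith
  have hprod : √(n + t) * √(n - t) ≤ n - 2 / n := by
    rw [← Real.sqrt_mul (by linarith), Real.sqrt_le_iff]
    have ht_sq : 4 ≤ t ^ 2 := by nlinarith [sq_abs t]
    have hsq : (n - 2 / n) ^ 2 = n ^ 2 - 4 + 4 / n ^ 2 := by field_simp; ring
    refine ⟨by linarith, ?_⟩
    rw [hsq]
    nlinarith [show 0 < 4 / n ^ 2 by positivity]
  have hfour_div : 4 / n = 2 * (2 / n) := by ring
  rw [Real.le_sqrt (by positivity) (by linarith)]
  nlinarith [Real.sq_sqrt (show 0 ≤ n + t by linarith), Real.sq_sqrt (show 0 ≤ n - t by linarith)]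

lemma sqrt_four_mul_sub_four_div_le {n : ℝ} (hn : 1 ≤ n) :
    √(4 * n - 4 / n) ≤ 2 * √n - 1 / (n * √n) := by
  have hs : 1 ≤ √n := Real.one_le_sqrt.mpr hn
  have hn_eq : n = √n ^ 2 := (Real.sq_sqrt (by linarith)).symm
  set a := √n
  rw [Real.sqrt_le_iff, hn_eq]
  constructor
  · rw [sub_nonneg, div_le_iff₀ (by positivity)]
    nlinarith
  · field_simp
    nlinarith

lemma sqrt_add_add_sqrt_sub_le {n t : ℝ} (ht : 2 ≤ |t|) (htn : |t| ≤ n) :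
    √(n + t) + √(n - t) ≤ 2 * √n - 1 / (n * √n) :=
  (sqrt_add_add_sqrt_sub_le_sqrt_four_mul_sub ht htn).trans
    (sqrt_four_mul_sub_four_div_le (by linarith [ht.trans htn]))

/-- Let `N` be even and `U ∈ O(N)`. If `S` is a sign matrix of `U` (entries `±1`
with `Sᵢⱼ·Uᵢⱼ = |Uᵢⱼ|`) which is not Hadamard, i.e. `S` has two distinct rows
that are not orthogonal, then `‖U‖₁ ≤ N√N − 1/(N√N)`. -/
theorem norm1_le_of_sign_not_hadamard {N : ℕ} (hN : Even N)
    (U S : Matrix (Fin N) (Fin N) ℝ) (hU : U * Uᵀ = 1)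
    (hS : ∀ i j, S i j = 1 ∨ S i j = -1)
    (hSU : ∀ i j, S i j * U i j = |U i j|)
    (hnotH : ∃ i j, i ≠ j ∧ ∑ k, S i k * S j k ≠ 0) :
    ∑ i, ∑ j, |U i j| ≤ (N : ℝ) * Real.sqrt N - 1 / ((N : ℝ) * Real.sqrt N) := by
  obtain ⟨i, j, hij, ht⟩ := hnotH
  have hUU : ∀ i j, U i ⬝ᵥ U j = if i = j then 1 else 0 := fun i j => by
    simpa [mul_apply', one_apply] using congrFun (congrFun hU i) j
  have hSS : ∀ i, S i ⬝ᵥ S i = N := fun i => by simpa using dotProduct_self_of_sign (hS i)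
  have hrow : ∀ i, ∑ k, |U i k| = S i ⬝ᵥ U i := fun i => by simp [dotProduct, hSU]
  have hrow_le : ∀ i, ∑ k, |U i k| ≤ √N := fun i => by
    simpa [hrow, hSS, hUU] using dotProduct_le_sqrt_mul_sqrt (S i) (U i)
  have hsign_prod : ∀ k, S i k * S j k = 1 ∨ S i k * S j k = -1 := fun k => by
    rcases hS i k with h | h <;> rcases hS j k with h' | h' <;> simp [h, h']
  have hpair : ∑ k, |U i k| + ∑ k, |U j k| ≤ 2 * √N - 1 / (N * √N) := by
    rw [hrow, hrow]
    refine (dotProduct_add_dotProduct_le (hSS i) (hSS j) (by simp [hUU]) (by simp [hUU])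
      (by simp [hUU, hij])).trans (sqrt_add_add_sqrt_sub_le ?_ ?_)
    · exact two_le_abs_sum_of_sign hsign_prod (by simpa using hN) ht
    · simpa [dotProduct] using abs_sum_le_card_of_sign hsign_prod
  simpa using sum_le_card_mul_sub_of_pair_le hrow_le hij hpair
end

section
/- Let S^{N−1} ⊂ ℝ^N be the unit sphere equipped with the uniform probability measure, and let k_1, …, k_p ∈ ℕ with p ≤ N. Then ∫_{S^{N−1}} |x_1^{k_1} ⋯ x_p^{k_p}| dx = (2/π)^{Σ} · D(N−1)·D(k_1)⋯D(k_p) / D(N + k_1 + ⋯ + k_p − 1), where D(m) = (m−1)(m−3)(m−5)⋯ (the product ending at 2 if m is odd and at 1 if m is even, with D(0) = D(1) = 1), and Σ = ⌊odds/2⌋ if N is odd and Σ = ⌊(odds+1)/2⌋ if N is even, 'odds' being the number of odd integers among k_1, …, k_p. -/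
/-!
Integrate `∏ⱼ |xⱼ|^{mⱼ} e^{-‖x‖²}` over `ℝᴺ` in two ways. Coordinatewise (Fubini) it is
`∏ⱼ Γ((mⱼ+1)/2)`; in polar coordinates it is the moment over the sphere times
`Γ((N + ∑ mⱼ)/2)/2`, since the integrand is homogeneous of degree `∑ mⱼ`. Taking `m = 0` gives
the area of the sphere, so the normalized moment is `Γ(N/2) / Γ((N + ∑ mⱼ)/2) · ∏ⱼ Γ((mⱼ+1)/2)/√π`.
Each Gamma value is `Γ((m+1)/2) = √π · D(m) · √(2/π)^(m mod 2) / √2^m`, so the ratio becomes the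
ratio of the `D`'s times a power of `√(2/π)`, whose exponent counts the odd arguments of the
numerator minus those of the denominator; this count is `2Σ`.
-/

open MeasureTheory Metric

/-- The uniform probability measure on the unit sphere of `ℝᴺ`. -/
noncomputable def sphereUniform (N : ℕ) :
    Measure (sphere (0 : EuclideanSpace ℝ (Fin N)) 1) :=
  ((volume : Measure (EuclideanSpace ℝ (Fin N))).toSphere Set.univ)⁻¹ •
    (volume : Measure (EuclideanSpace ℝ (Fin N))).toSphere

/-- The modified double factorial `D(m) = (m−1)(m−3)(m−5)⋯`, the product ending
at `2` if `m` is odd and at `1` if `m` is even, with `D(0) = D(1) = 1`. -/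
def modDoubleFactorial : ℕ → ℕ
  | 0 => 1
  | 1 => 1
  | (n + 2) => (n + 1) * modDoubleFactorial n

open Real Set Finset Function

theorem integral_Ioi_pow_mul_exp_neg_sq (m : ℕ) :
    ∫ t in Ioi (0 : ℝ), t ^ m * exp (-t ^ 2) = Gamma ((m + 1) / 2) / 2 := by
  have h := integral_rpow_mul_exp_neg_rpow (p := 2) (q := m) two_pos
    (by linarith [(Nat.cast_nonneg m : (0 : ℝ) ≤ m)])
  rw [div_eq_inv_mul, ← one_div, ← h]
  refine setIntegral_congr_fun measurableSet_Ioi fun t _ ↦ ?_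
  norm_cast

theorem integral_abs_pow_mul_exp_neg_sq (m : ℕ) :
    ∫ t : ℝ, |t| ^ m * exp (-t ^ 2) = Gamma ((m + 1) / 2) := by
  have h (t : ℝ) : |t| ^ m * exp (-t ^ 2) = |t| ^ m * exp (-|t| ^ 2) := by rw [sq_abs]
  rw [integral_congr_ae (.of_forall h), integral_comp_abs (f := fun t ↦ t ^ m * exp (-t ^ 2)),
    integral_Ioi_pow_mul_exp_neg_sq]
  ring

theorem EuclideanSpace.integral_prod_abs_pow_mul_exp_neg_norm_sq {ι : Type*} [Fintype ι]
    (m : ι → ℕ) :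
    ∫ x : EuclideanSpace ℝ ι, (∏ j, |x j| ^ m j) * exp (-‖x‖ ^ 2) =
      ∏ j, Gamma ((m j + 1) / 2) := by
  simp_rw [← integral_abs_pow_mul_exp_neg_sq]
  rw [← integral_fintype_prod_eq_prod, ← volume_pi,
    ← (EuclideanSpace.volume_preserving_symm_measurableEquiv_toLp ι).integral_comp
      (MeasurableEquiv.measurableEmbedding _)]
  congr 1 with x
  simp [EuclideanSpace.norm_sq_eq, ← sum_neg_distrib, exp_sum, prod_mul_distrib]

theorem MeasureTheory.Measure.integral_volumeIoiPow (n : ℕ) (f : ℝ → ℝ) :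
    ∫ r, f r ∂volumeIoiPow n = ∫ r in Ioi (0 : ℝ), r ^ n * f r := by
  simp only [Measure.volumeIoiPow, ENNReal.ofReal]
  rw [integral_withDensity_eq_integral_smul (measurable_subtype_coe.pow_const _).real_toNNReal,
    integral_subtype_comap measurableSet_Ioi fun r ↦ Real.toNNReal (r ^ n) • f r]
  refine setIntegral_congr_fun measurableSet_Ioi fun r hr ↦ ?_
  rw [NNReal.smul_def, Real.coe_toNNReal _ (pow_nonneg hr.out.le _), smul_eq_mul]

theorem integral_mul_fun_norm_of_homogeneous {E : Type*} [NormedAddCommGroup E]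
    [NormedSpace ℝ E] [FiniteDimensional ℝ E] [MeasurableSpace E] [BorelSpace E] [Nontrivial E]
    (μ : Measure E) [μ.IsAddHaarMeasure] {g : E → ℝ} {K : ℕ}
    (hg : ∀ (r : ℝ) (x : E), 0 < r → g (r • x) = r ^ K * g x) (f : ℝ → ℝ) :
    ∫ x, g x * f ‖x‖ ∂μ =
      (∫ ω, g ω ∂μ.toSphere) * ∫ r in Ioi (0 : ℝ), r ^ (Module.finrank ℝ E - 1 + K) * f r := by
  calc ∫ x, g x * f ‖x‖ ∂μ = ∫ x : ({0}ᶜ : Set E), g x * f ‖x.1‖ ∂μ.comap (↑) := by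
        rw [integral_subtype_comap (measurableSet_singleton _).compl fun x ↦ g x * f ‖x‖,
          restrict_compl_singleton]
    _ = ∫ z, g z.1 * (z.2.1 ^ K * f z.2)
          ∂μ.toSphere.prod (.volumeIoiPow (Module.finrank ℝ E - 1)) := by
        rw [← μ.measurePreserving_homeomorphUnitSphereProd.integral_comp
          (Homeomorph.measurableEmbedding _)]
        congr 1 with x
        have hx : 0 < ‖(x : E)‖ := norm_pos_iff.2 x.2
        simp only [homeomorphUnitSphereProd_apply_fst_coe, homeomorphUnitSphereProd_apply_snd_coe]
        have hgx := hg ‖(x : E)‖ (‖(x : E)‖⁻¹ • x) hx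
        rw [smul_inv_smul₀ hx.ne'] at hgx
        rw [hgx]
        ring
    _ = _ := by
        rw [integral_prod_mul (fun ω : sphere (0 : E) 1 ↦ g ω)
            fun r : Ioi (0 : ℝ) ↦ (r : ℝ) ^ K * f r,
          Measure.integral_volumeIoiPow _ fun r ↦ r ^ K * f r]
        simp_rw [pow_add, mul_assoc]

theorem EuclideanSpace.integral_toSphere_prod_abs_pow_mul_Gamma {ι : Type*} [Fintype ι]
    [Nonempty ι] (m : ι → ℕ) :
    (∫ ω : sphere (0 : EuclideanSpace ℝ ι) 1, ∏ j, |(ω : EuclideanSpace ℝ ι) j| ^ m j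
        ∂volume.toSphere) * (Gamma ((Fintype.card ι + ∑ j, m j : ℕ) / 2) / 2) =
      ∏ j, Gamma ((m j + 1) / 2) := by
  have hom (r : ℝ) (x : EuclideanSpace ℝ ι) (hr : 0 < r) :
      ∏ j, |(r • x) j| ^ m j = r ^ (∑ j, m j) * ∏ j, |x j| ^ m j := by
    simp [abs_mul, abs_of_pos hr, mul_pow, prod_mul_distrib, prod_pow_eq_pow_sum]
  rw [← EuclideanSpace.integral_prod_abs_pow_mul_exp_neg_norm_sq,
    integral_mul_fun_norm_of_homogeneous _ hom fun r ↦ exp (-r ^ 2), finrank_euclideanSpace,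
    integral_Ioi_pow_mul_exp_neg_sq]
  push_cast [Nat.cast_sub Fintype.card_pos]
  ring_nf

theorem integral_sphereUniform_prod_abs_pow {N : ℕ} (hN : 1 ≤ N) (m : Fin N → ℕ) :
    ∫ ω, ∏ j, |(ω : EuclideanSpace ℝ (Fin N)) j| ^ m j ∂sphereUniform N =
      Gamma (N / 2) / Gamma ((N + ∑ j, m j : ℕ) / 2) * ∏ j, Gamma ((m j + 1) / 2) / √π := by
  have : Nonempty (Fin N) := ⟨⟨0, hN⟩⟩
  have hmass := EuclideanSpace.integral_toSphere_prod_abs_pow_mul_Gamma (0 : Fin N → ℕ)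
  simp only [Pi.zero_apply, pow_zero, prod_const_one, integral_const, smul_eq_mul, mul_one,
    sum_const_zero, add_zero, Fintype.card_fin, Nat.cast_zero, zero_add, Gamma_one_half_eq,
    prod_const, card_univ] at hmass
  have hmom := EuclideanSpace.integral_toSphere_prod_abs_pow_mul_Gamma m
  rw [Fintype.card_fin] at hmom
  rw [sphereUniform, integral_smul_measure, ENNReal.toReal_inv, smul_eq_mul, ← measureReal_def,
    prod_div_distrib, prod_const, card_univ, Fintype.card_fin, ← hmass, ← hmom]
  field_simp

theorem modDoubleFactorial_pos : ∀ m, 0 < modDoubleFactorial m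
  | 0 => one_pos
  | 1 => one_pos
  | (n + 2) => mul_pos n.succ_pos (modDoubleFactorial_pos n)

theorem Gamma_natCast_add_one_div_two : ∀ m : ℕ,
    Gamma ((m + 1) / 2) = √π * (modDoubleFactorial m * √(2 / π) ^ (m % 2) / √2 ^ m)
  | 0 => by
      rw [Nat.cast_zero, zero_add, Gamma_one_half_eq]
      simp [modDoubleFactorial]
  | 1 => by
      rw [Nat.cast_one, one_add_one_eq_two, div_self two_ne_zero, Gamma_one]
      simp only [modDoubleFactorial, Nat.cast_one, Nat.mod_succ, pow_one, one_mul,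
        sqrt_div zero_le_two]
      field_simp
  | (m + 2) => by
      have hm : ((m : ℝ) + 1) / 2 ≠ 0 := by positivity
      rw [Nat.add_mod_right, modDoubleFactorial, pow_add, sq_sqrt zero_le_two]
      push_cast
      rw [show ((m : ℝ) + 2 + 1) / 2 = (m + 1) / 2 + 1 by ring, Gamma_add_one hm,
        Gamma_natCast_add_one_div_two m]
      field_simp

theorem Gamma_natCast_div_two {n : ℕ} (hn : 1 ≤ n) :
    Gamma (n / 2) =
      √π * (modDoubleFactorial (n - 1) * √(2 / π) ^ ((n - 1) % 2) / √2 ^ (n - 1)) := by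
  rw [← Gamma_natCast_add_one_div_two, Nat.cast_sub hn, Nat.cast_one, sub_add_cancel]

theorem sum_mod_two_eq_card_filter_odd {ι : Type*} (s : Finset ι) (k : ι → ℕ) :
    ∑ i ∈ s, k i % 2 = (s.filter fun i ↦ Odd (k i)).card := by
  rw [card_filter]
  refine sum_congr rfl fun i _ ↦ ?_
  split_ifs with h
  · exact Nat.odd_iff.1 h
  · exact Nat.not_odd_iff.1 h

theorem Gamma_div_Gamma_mul_prod_Gamma_div_sqrt_pi {ι : Type*} [Fintype ι] {N : ℕ} (hN : 1 ≤ N)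
    (k : ι → ℕ) :
    Gamma (N / 2) / Gamma ((N + ∑ i, k i : ℕ) / 2) * ∏ i, Gamma ((k i + 1) / 2) / √π =
      (2 / π) ^
          (if Odd N then (univ.filter fun i => Odd (k i)).card / 2
            else ((univ.filter fun i => Odd (k i)).card + 1) / 2) *
        ((modDoubleFactorial (N - 1) : ℝ) * ∏ i, (modDoubleFactorial (k i) : ℝ)) /
        (modDoubleFactorial (N + ∑ i, k i - 1) : ℝ) := by
  set K := ∑ i, k i
  set odds := (univ.filter fun i => Odd (k i)).card
  set σ := if Odd N then odds / 2 else (odds + 1) / 2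
  have hodds : ∑ i, k i % 2 = odds := sum_mod_two_eq_card_filter_odd _ k
  have hK : K % 2 = odds % 2 := by rw [Finset.sum_nat_mod, hodds]
  have hσ : (N - 1) % 2 + odds = 2 * σ + (N + K - 1) % 2 := by
    simp only [σ]
    split_ifs with h
    · have := Nat.odd_iff.1 h; omega
    · have := Nat.not_odd_iff.1 h; omega
  have ha : (2 / π) ^ σ = √(2 / π) ^ (2 * σ) := by
    rw [pow_mul, sq_sqrt (by positivity)]
  have hD : (modDoubleFactorial (N + K - 1) : ℝ) ≠ 0 := by
    exact_mod_cast (modDoubleFactorial_pos _).ne'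
  have hprod : ∏ i, Gamma ((k i + 1) / 2) / √π =
      (∏ i, (modDoubleFactorial (k i) : ℝ)) * √(2 / π) ^ odds / √2 ^ K := by
    simp_rw [Gamma_natCast_add_one_div_two, mul_div_cancel_left₀ _ (sqrt_pos.2 pi_pos).ne']
    rw [prod_div_distrib, prod_mul_distrib, prod_pow_eq_pow_sum, prod_pow_eq_pow_sum, hodds]
  have hpow : √(2 / π) ^ ((N - 1) % 2) * √(2 / π) ^ odds =
      √(2 / π) ^ (2 * σ) * √(2 / π) ^ ((N + K - 1) % 2) := by
    rw [← pow_add, hσ, pow_add]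
  have hpow₂ : √2 ^ (N + K - 1) = √2 ^ (N - 1) * √2 ^ K := by
    rw [← pow_add, Nat.sub_add_comm hN]
  rw [Gamma_natCast_div_two hN, Gamma_natCast_div_two (by omega), hprod, ha, hpow₂]
  field_simp
  linear_combination (modDoubleFactorial (N - 1) * ∏ i, (modDoubleFactorial (k i) : ℝ)) * hpow

@[to_additive]
theorem Function.Injective.prod_extend_zero {ι κ M : Type*} [Fintype ι] [Fintype κ]
    [CommMonoid M] {e : ι → κ} (he : Injective e) (k : ι → ℕ) {g : κ → ℕ → M}
    (hg : ∀ j, g j 0 = 1) :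
    ∏ j, g j (extend e k 0 j) = ∏ i, g (e i) (k i) := by
  refine (Fintype.prod_of_injective e he _ _ (fun j hj ↦ ?_) fun i ↦ by rw [he.extend_apply]).symm
  rw [extend_apply' _ _ _ (by simpa using hj), Pi.zero_apply, hg]

/-- For `p ≤ N` and `k₁, …, k_p ∈ ℕ`, the moment `∫_{S^{N−1}} |x₁^{k₁} ⋯ x_p^{k_p}| dx`
with respect to the uniform probability measure equals
`(2/π)^Σ · D(N−1)·D(k₁)⋯D(k_p) / D(N + k₁ + ⋯ + k_p − 1)`, where
`Σ = ⌊odds/2⌋` if `N` is odd and `Σ = ⌊(odds+1)/2⌋` if `N` is even, `odds` being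
the number of odd integers among `k₁, …, k_p`. -/
theorem sphere_moment_formula {N p : ℕ} (hN : 1 ≤ N) (hp : p ≤ N) (k : Fin p → ℕ) :
    (∫ x : sphere (0 : EuclideanSpace ℝ (Fin N)) 1,
        |∏ i : Fin p, ((x : EuclideanSpace ℝ (Fin N)) (Fin.castLE hp i)) ^ k i|
        ∂(sphereUniform N)) =
      (2 / Real.pi) ^
          (if Odd N then (Finset.univ.filter fun i : Fin p => Odd (k i)).card / 2
            else ((Finset.univ.filter fun i : Fin p => Odd (k i)).card + 1) / 2) *
        ((modDoubleFactorial (N - 1) : ℝ) * ∏ i : Fin p, (modDoubleFactorial (k i) : ℝ)) /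
        (modDoubleFactorial (N + ∑ i : Fin p, k i - 1) : ℝ) := by
  have he := Fin.castLE_injective hp
  have hintegrand (x : sphere (0 : EuclideanSpace ℝ (Fin N)) 1) :
      |∏ i, ((x : EuclideanSpace ℝ (Fin N)) (Fin.castLE hp i)) ^ k i| =
        ∏ j, |(x : EuclideanSpace ℝ (Fin N)) j| ^ extend (Fin.castLE hp) k 0 j := by
    rw [abs_prod, he.prod_extend_zero k fun _ ↦ pow_zero _]
    simp_rw [abs_pow]
  simp_rw [hintegrand]
  rw [integral_sphereUniform_prod_abs_pow hN, he.sum_extend_zero k (g := fun _ n ↦ n) fun _ ↦ rfl,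
    he.prod_extend_zero k (g := fun _ n ↦ Gamma ((n + 1) / 2) / √π) fun _ ↦ by
      rw [Nat.cast_zero, zero_add, Gamma_one_half_eq, div_self (sqrt_pos.2 pi_pos).ne'],
    Gamma_div_Gamma_mul_prod_Gamma_div_sqrt_pi hN]
end

section
/- For every ε > 0 there exists N₀ such that for all N ≥ N₀, the quantity K_N = sup_{U ∈ O(N)} ||U||₁ satisfies K_N ≥ (√(2/π) − ε)·N·√N. -/
/-!
The discrete sine transform `U j k = √(2/(N+1)) sin (π j k/(N+1))`, `1 ≤ j, k ≤ N`, is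
orthogonal. Rather than using equidistribution of the angles `π j k/(N+1)` (which gives
`‖U‖₁ ≈ (2√2/π) N√N`), we bound `|sin θ|` from below by a trigonometric polynomial of degree 6
with mean `75/128`. Its non-constant modes sum to zero along every row except at most three
(those where `N+1` divides `2j` or `3j`), so `‖U‖₁ ≥ (75√2/128) (N-3) √N`, and
`75√2/128 ≈ 0.829` exceeds `√(2/π) ≈ 0.798`.
-/

open Matrix Finset Real

lemma sum_range_cos_pi_mul_div {m : ℕ} (hm : m ≠ 0) {p : ℤ} (hp : ¬ 2 * (m : ℤ) ∣ p) :
    ∑ k ∈ range m, cos (π * p * k / m) = (1 - cos (π * p)) / 2 := by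
  set θ := π * p / m with hθ
  have hsin : sin (θ / 2) ≠ 0 := by
    rw [Ne, sin_eq_zero_iff]
    rintro ⟨n, hn⟩
    refine hp ⟨n, ?_⟩
    rw [hθ, eq_div_iff two_ne_zero, eq_div_iff (by positivity)] at hn
    have : (p : ℝ) = 2 * m * n := by nlinarith [pi_pos]
    exact_mod_cast this
  have htel : ∀ k : ℕ, 2 * sin (θ / 2) * cos (π * p * k / m) =
      sin (((k + 1 : ℕ) - 1 / 2) * θ) - sin ((k - 1 / 2) * θ) := by
    intro k
    rw [show π * p * k / m = k * θ by ring]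
    push_cast
    rw [show ((k : ℝ) + 1 - 1 / 2) * θ = k * θ + θ / 2 by ring,
      show ((k : ℝ) - 1 / 2) * θ = k * θ - θ / 2 by ring, sin_add, sin_sub]
    ring
  have hend : sin ((m - 1 / 2) * θ) = - cos (π * p) * sin (θ / 2) := by
    rw [show ((m : ℝ) - 1 / 2) * θ = p * π - θ / 2 by rw [hθ]; field_simp, sin_sub,
      sin_int_mul_pi, mul_comm (p : ℝ) π]
    ring
  apply mul_left_cancel₀ (mul_ne_zero two_ne_zero hsin)
  rw [mul_sum, sum_congr rfl fun k _ => htel k,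
    sum_range_sub (fun k : ℕ => sin ((k - 1 / 2) * θ)), hend, Nat.cast_zero,
    show ((0 : ℝ) - 1 / 2) * θ = -(θ / 2) by ring, sin_neg]
  ring

lemma sum_range_cos_two_pi_mul_div {m n : ℕ} (hn : ¬ m ∣ n) :
    ∑ k ∈ range m, cos (2 * π * n * k / m) = 0 := by
  obtain rfl | hm := eq_or_ne m 0
  · simp
  have h := sum_range_cos_pi_mul_div hm (p := 2 * n) (by
    rwa [mul_dvd_mul_iff_left two_ne_zero, Int.natCast_dvd_natCast])
  rw [show π * ((2 * n : ℤ) : ℝ) = (n : ℤ) * (2 * π) by push_cast; ring, cos_int_mul_two_pi,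
    sub_self, zero_div] at h
  rw [← h]
  exact sum_congr rfl fun k _ => by push_cast; ring_nf

lemma sum_range_sin_mul_sin {m a b : ℕ} (ha : 0 < a) (ham : a < m) (hb : 0 < b) (hbm : b < m) :
    ∑ k ∈ range m, sin (π * a * k / m) * sin (π * b * k / m) =
      if a = b then (m : ℝ) / 2 else 0 := by
  have hm : m ≠ 0 := by omega
  have hprod : ∀ x y : ℝ, sin x * sin y = (cos (x - y) - cos (x + y)) / 2 := fun x y => by
    rw [cos_sub, cos_add]; ring
  simp only [hprod, ← sum_div, sum_sub_distrib]
  split_ifs with hab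
  · subst hab
    simp only [sub_self, cos_zero, sum_const, card_range, nsmul_eq_mul, mul_one]
    rw [show ∑ k ∈ range m, cos (π * a * k / m + π * a * k / m) =
        ∑ k ∈ range m, cos (2 * π * a * k / m) from sum_congr rfl fun k _ => by ring_nf,
      sum_range_cos_two_pi_mul_div (Nat.not_dvd_of_pos_of_lt ha ham), sub_zero]
  · have hsub : ¬ 2 * (m : ℤ) ∣ a - b := fun h => by
      have := Int.eq_zero_of_abs_lt_dvd h (by rw [abs_lt]; omega)
      omega
    have hadd : ¬ 2 * (m : ℤ) ∣ a + b := fun h => by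
      have := Int.eq_zero_of_abs_lt_dvd h (by rw [abs_lt]; omega)
      omega
    have hcos : cos (π * ((a + b : ℤ) : ℝ)) = cos (π * ((a - b : ℤ) : ℝ)) := by
      rw [show π * ((a + b : ℤ) : ℝ) = π * ((a - b : ℤ) : ℝ) + b * (2 * π) by push_cast; ring,
        cos_add_nat_mul_two_pi]
    rw [show ∑ k ∈ range m, cos (π * a * k / m - π * b * k / m) =
        ∑ k ∈ range m, cos (π * ((a - b : ℤ) : ℝ) * k / m) from
          sum_congr rfl fun k _ => by push_cast; ring_nf,
      show ∑ k ∈ range m, cos (π * a * k / m + π * b * k / m) =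
        ∑ k ∈ range m, cos (π * ((a + b : ℤ) : ℝ) * k / m) from
          sum_congr rfl fun k _ => by push_cast; ring_nf,
      sum_range_cos_pi_mul_div hm hsub, sum_range_cos_pi_mul_div hm hadd, hcos]
    ring

-- In terms of `s = sin θ` the left side is `15 s² - 10 s⁴ + 3 s⁶`, and `8 |s|` exceeds it by
-- `|s| (1 - |s|)³ (3 s² + 9 |s| + 8)`.
lemma trigPoly_le_eight_mul_abs_sin (θ : ℝ) :
    75 / 16 - 125 / 32 * cos (2 * θ) - 11 / 16 * cos (4 * θ) - 3 / 32 * cos (6 * θ) ≤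
      8 * |sin θ| := by
  have hc2 : cos (2 * θ) = 1 - 2 * |sin θ| ^ 2 := by rw [cos_two_mul, sq_abs, cos_sq']; ring
  rw [show 4 * θ = 2 * (2 * θ) by ring, show 6 * θ = 3 * (2 * θ) by ring, cos_two_mul (2 * θ),
    cos_three_mul, hc2]
  have h0 := abs_nonneg (sin θ)
  have h1 : 0 ≤ 1 - |sin θ| := sub_nonneg.2 (abs_sin_le_one θ)
  have : 0 ≤ |sin θ| * (1 - |sin θ|) ^ 3 * (3 * |sin θ| ^ 2 + 9 * |sin θ| + 8) := by
    positivity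
  nlinarith

lemma card_mul_le_sum_abs_sin {ι : Type*} (s : Finset ι) (θ : ι → ℝ)
    (h2 : ∑ i ∈ s, cos (2 * θ i) = 0) (h4 : ∑ i ∈ s, cos (4 * θ i) = 0)
    (h6 : ∑ i ∈ s, cos (6 * θ i) = 0) :
    75 / 128 * #s ≤ ∑ i ∈ s, |sin (θ i)| := by
  have h := sum_le_sum fun i (_ : i ∈ s) => trigPoly_le_eight_mul_abs_sin (θ i)
  simp only [sum_sub_distrib, ← mul_sum, h2, h4, h6, sum_const, nsmul_eq_mul] at h
  linarith

lemma mul_le_sum_range_abs_sin {m a : ℕ} (h1 : ¬ m ∣ a) (h2 : ¬ m ∣ 2 * a)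
    (h3 : ¬ m ∣ 3 * a) :
    75 / 128 * (m : ℝ) ≤ ∑ k ∈ range m, |sin (π * a * k / m)| := by
  have hcos : ∀ n : ℕ, ¬ m ∣ n → ∀ c : ℝ, c * a = 2 * n →
      ∑ k ∈ range m, cos (c * (π * a * k / m)) = 0 := fun n hn c hc => by
    rw [← sum_range_cos_two_pi_mul_div hn]
    refine sum_congr rfl fun k _ => congrArg cos ?_
    rw [show c * (π * a * k / m) = π * (c * a) * k / m by ring, hc]
    ring
  simpa using card_mul_le_sum_abs_sin (range m) (fun k => π * a * k / m)
    (hcos a h1 2 rfl) (hcos (2 * a) h2 4 (by push_cast; ring))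
    (hcos (3 * a) h3 6 (by push_cast; ring))

lemma sum_fin_succ_eq_sum_range {M : Type*} [AddCommMonoid M] {f : ℕ → M} (hf : f 0 = 0)
    (N : ℕ) :
    ∑ k : Fin N, f (k + 1) = ∑ k ∈ range (N + 1), f k := by
  rw [sum_range_succ', hf, add_zero, Fin.sum_univ_eq_sum_range (fun k => f (k + 1))]

noncomputable def dstMatrix (N : ℕ) : Matrix (Fin N) (Fin N) ℝ :=
  fun j k => √(2 / (N + 1)) * sin (π * (j + 1 : ℕ) * (k + 1 : ℕ) / (N + 1 : ℕ))

lemma dstMatrix_mul_transpose (N : ℕ) : dstMatrix N * (dstMatrix N)ᵀ = 1 := by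
  ext j l
  have hw : √(2 / (N + 1)) * √(2 / (N + 1)) = 2 / ((N + 1 : ℕ) : ℝ) := by
    rw [mul_self_sqrt (by positivity)]; push_cast; rfl
  calc (dstMatrix N * (dstMatrix N)ᵀ) j l
      = 2 / ((N + 1 : ℕ) : ℝ) * ∑ k ∈ range (N + 1),
          (sin (π * (j + 1 : ℕ) * k / (N + 1 : ℕ)) *
            sin (π * (l + 1 : ℕ) * k / (N + 1 : ℕ))) := by
        rw [mul_apply, ← sum_fin_succ_eq_sum_range (by simp), mul_sum]
        refine sum_congr rfl fun k _ => ?_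
        simp only [dstMatrix, transpose_apply, ← hw]
        push_cast
        ring
    _ = (1 : Matrix (Fin N) (Fin N) ℝ) j l := by
        rw [sum_range_sin_mul_sin (by omega) (by omega) (by omega) (by omega), one_apply]
        simp only [add_left_inj, Fin.val_inj]
        split_ifs
        · field_simp
        · rw [mul_zero]

lemma le_sum_abs_dstMatrix_row {N : ℕ} (j : Fin N) (h2 : ¬ N + 1 ∣ 2 * (j + 1))
    (h3 : ¬ N + 1 ∣ 3 * (j + 1)) :
    75 / 128 * √(2 * (N + 1)) ≤ ∑ k, |dstMatrix N j k| := by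
  have hw : √(2 / (N + 1)) * ((N + 1 : ℕ) : ℝ) = √(2 * (N + 1)) := by
    rw [← sqrt_sq (by positivity : (0 : ℝ) ≤ (N + 1 : ℕ)), ← sqrt_mul (by positivity)]
    congr 1
    push_cast
    field_simp
  have h1 : ¬ N + 1 ∣ j + 1 := Nat.not_dvd_of_pos_of_lt (by omega) (by omega)
  calc 75 / 128 * √(2 * (N + 1))
      = √(2 / (N + 1)) * (75 / 128 * ((N + 1 : ℕ) : ℝ)) := by rw [← hw]; ring
    _ ≤ √(2 / (N + 1)) *
          ∑ k ∈ range (N + 1), |sin (π * (j + 1 : ℕ) * k / (N + 1 : ℕ))| :=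
        mul_le_mul_of_nonneg_left (mul_le_sum_range_abs_sin h1 h2 h3) (sqrt_nonneg _)
    _ = ∑ k, |dstMatrix N j k| := by
        rw [← sum_fin_succ_eq_sum_range (by simp), mul_sum]
        refine sum_congr rfl fun k _ => ?_
        rw [dstMatrix, abs_mul, abs_of_nonneg (sqrt_nonneg _)]

lemma card_filter_dvd_le_three (N : ℕ) :
    #{j : Fin N | N + 1 ∣ 2 * (j + 1) ∨ N + 1 ∣ 3 * (j + 1)} ≤ 3 := by
  classical
  refine (card_le_card_of_injOn Fin.val (t := {(N + 1) / 2 - 1, (N + 1) / 3 - 1,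
    2 * (N + 1) / 3 - 1}) ?_ Fin.val_injective.injOn).trans card_le_three
  intro j hj
  simp only [coe_filter, mem_univ, true_and, Set.mem_ofPred_eq] at hj
  simp only [coe_insert, coe_singleton, Set.mem_insert_iff, Set.mem_singleton_iff]
  have hjN := j.isLt
  rcases hj with h | ⟨q, hq⟩
  · have := Nat.eq_of_dvd_of_lt_two_mul (by omega) h (by omega)
    omega
  · have hq3 : q < 3 := Nat.lt_of_mul_lt_mul_left (a := N + 1) (by rw [← hq]; omega)
    interval_cases q <;> omega

lemma le_sum_sum_abs_dstMatrix (N : ℕ) :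
    75 / 128 * √2 * (N - 3) * √N ≤ ∑ j, ∑ k, |dstMatrix N j k| := by
  classical
  set bad : Finset (Fin N) := {j | N + 1 ∣ 2 * (j + 1) ∨ N + 1 ∣ 3 * (j + 1)}
  set good : Finset (Fin N) := {j | ¬ (N + 1 ∣ 2 * (j + 1) ∨ N + 1 ∣ 3 * (j + 1))}
  have hcard : (N : ℝ) - 3 ≤ #good := by
    have h := card_filter_add_card_filter_not (s := univ)
      (fun j : Fin N => N + 1 ∣ 2 * (j + 1) ∨ N + 1 ∣ 3 * (j + 1))
    have hbad : (#bad : ℝ) ≤ 3 := by exact_mod_cast card_filter_dvd_le_three N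
    rw [card_univ, Fintype.card_fin] at h
    have : (#bad : ℝ) + #good = N := by exact_mod_cast h
    linarith
  have hrow : ∀ j ∈ good, 75 / 128 * √2 * √N ≤ ∑ k, |dstMatrix N j k| := fun j hj => by
    simp only [good, mem_filter, mem_univ, true_and, not_or] at hj
    refine le_trans ?_ (le_sum_abs_dstMatrix_row j hj.1 hj.2)
    rw [mul_assoc, ← sqrt_mul zero_le_two]
    gcongr
    linarith
  calc 75 / 128 * √2 * (N - 3) * √N
      ≤ #good • (75 / 128 * √2 * √N) := by
        rw [nsmul_eq_mul, mul_right_comm, mul_comm]; gcongr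
    _ ≤ ∑ j ∈ good, ∑ k, |dstMatrix N j k| := card_nsmul_le_sum _ _ _ hrow
    _ ≤ ∑ j, ∑ k, |dstMatrix N j k| :=
        sum_le_sum_of_subset_of_nonneg (subset_univ _) fun _ _ _ => by positivity

lemma bddAbove_sum_abs_of_mul_transpose_eq_one (N : ℕ) :
    BddAbove {x : ℝ | ∃ U : Matrix (Fin N) (Fin N) ℝ, U * Uᵀ = 1 ∧ x = ∑ i, ∑ j, |U i j|} := by
  refine ⟨N * N, ?_⟩
  rintro _ ⟨U, hU, rfl⟩
  have hentry (i j) : |U i j| ≤ 1 :=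
    entry_norm_bound_of_unitary ((mem_orthogonalGroup_iff (Fin N) ℝ).2 hU) i j
  calc ∑ i, ∑ j, |U i j| ≤ ∑ _i : Fin N, ∑ _j : Fin N, (1 : ℝ) :=
        sum_le_sum fun i _ => sum_le_sum fun j _ => hentry i j
    _ = N * N := by simp

lemma sqrt_two_div_pi_le : √(2 / π) ≤ 75 / 128 * √2 := by
  rw [show 75 / 128 * √2 = √((75 / 128) ^ 2 * 2) by
    rw [sqrt_mul (by positivity), sqrt_sq (by positivity)]]
  apply sqrt_le_sqrt
  rw [div_le_iff₀ pi_pos]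
  nlinarith [pi_gt_three]

/-- With `N → ∞`, `K_N = sup_{U ∈ O(N)} ‖U‖₁ ≥ √(2/π)·N·√N`: for every `ε > 0`
there is `N₀` such that `K_N ≥ (√(2/π) − ε)·N·√N` for all `N ≥ N₀`. -/
theorem sSup_norm1_asymptotic :
    ∀ ε > (0 : ℝ), ∃ N₀ : ℕ, ∀ N ≥ N₀,
      (Real.sqrt (2 / Real.pi) - ε) * N * Real.sqrt N ≤
        sSup {x : ℝ | ∃ U : Matrix (Fin N) (Fin N) ℝ,
          U * Uᵀ = 1 ∧ x = ∑ i, ∑ j, |U i j|} := by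
  intro ε hε
  refine ⟨⌈3 / ε⌉₊, fun N hN => ?_⟩
  have hεN : 3 ≤ ε * N := by
    rw [← div_le_iff₀' hε]; exact (Nat.le_ceil _).trans (by exact_mod_cast hN)
  have hc : √(2 / π) ≤ 75 / 128 * √2 := sqrt_two_div_pi_le
  have hc1 : 75 / 128 * √2 ≤ 1 := by
    nlinarith [sq_sqrt (zero_le_two : (0 : ℝ) ≤ 2), sqrt_nonneg 2]
  have hN3 : (√(2 / π) - ε) * N ≤ 75 / 128 * √2 * (N - 3) := by nlinarith
  calc (√(2 / π) - ε) * N * √N ≤ 75 / 128 * √2 * (N - 3) * √N := by gcongr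
    _ ≤ ∑ i, ∑ j, |dstMatrix N i j| := le_sum_sum_abs_dstMatrix N
    _ ≤ _ := le_csSup (bddAbove_sum_abs_of_mul_transpose_eq_one N)
        ⟨_, dstMatrix_mul_transpose N, rfl⟩
end

section
/- Let I₂(N) = ∫_{O(N)} ||U||₁² dU, the second moment of the 1-norm with respect to the Haar probability measure on the compact group O(N). Then for every ε > 0 there exists N₀ such that for all N ≥ N₀, I₂(N) ≥ (1 + 4/π − ε)·N². -/
/-!
Pointwise, `|x| ≥ 3x² - 4x⁴` for every real `x`; summed over the entries of an orthogonal `U`,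
whose columns are unit vectors, this gives `‖U‖₁ ≥ 3N - 4 ∑ᵢⱼ Uᵢⱼ⁴`. To bound the fourth moments,
use an orthogonal matrix acting on two rows `i ≠ k` as a rotation by `π/4`: Haar invariance gives
`6 E[Uᵢⱼ² Uₖⱼ²] = E[Uᵢⱼ⁴] + E[Uₖⱼ⁴]`, and expanding `E[(∑ᵢ Uᵢⱼ²)²] = 1` yields
`∑ᵢ E[Uᵢⱼ⁴] = 3/(N+2)`. Hence `E‖U‖₁ ≥ 3N - 12`, and by Jensen `E‖U‖₁² ≥ (3N - 12)² ≥ 4N²`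
for `N ≥ 12`, while `1 + 4/π < 4`.
-/

open Matrix MeasureTheory Real

noncomputable instance matrixMeasurableSpace (N : ℕ) :
    MeasurableSpace (Matrix (Fin N) (Fin N) ℝ) :=
  (inferInstance : MeasurableSpace (Fin N → Fin N → ℝ))

theorem Continuous.integrable_of_compactSpace {X : Type*} [TopologicalSpace X] [CompactSpace X]
    [MeasurableSpace X] [OpensMeasurableSpace X] {μ : Measure X} [IsFiniteMeasure μ]
    {f : X → ℝ} (hf : Continuous f) : Integrable f μ :=
  hf.integrable_of_hasCompactSupport (HasCompactSupport.of_compactSpace f)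

theorem MeasureTheory.MeasurePreserving.integral_comp_of_aestronglyMeasurable
    {α β : Type*} [MeasurableSpace α] [MeasurableSpace β] {μ : Measure α} {ν : Measure β}
    {φ : α → β} (h : MeasurePreserving φ μ ν) {f : β → ℝ} (hf : AEStronglyMeasurable f ν) :
    ∫ x, f (φ x) ∂μ = ∫ y, f y ∂ν := by
  rw [← h.map_eq] at hf ⊢
  exact (integral_map h.measurable.aemeasurable hf).symm

theorem sq_integral_le_integral_sq {α : Type*} [MeasurableSpace α] {μ : Measure α}
    [IsProbabilityMeasure μ] {f : α → ℝ} (hf : Integrable f μ) (hf2 : Integrable (f ^ 2) μ) :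
    (∫ x, f x ∂μ) ^ 2 ≤ ∫ x, f x ^ 2 ∂μ :=
  even_two.convexOn_pow.map_integral_le (continuous_pow 2).continuousOn isClosed_univ
    (ae_of_all _ fun _ => trivial) hf hf2

theorem three_mul_sq_sub_four_mul_pow_four_le_abs (x : ℝ) : 3 * x ^ 2 - 4 * x ^ 4 ≤ |x| := by
  have h : 0 ≤ |x| * (2 * |x| - 1) ^ 2 * (|x| + 1) := by positivity
  nlinarith [sq_abs x]

namespace Matrix

variable {n : Type*} [Fintype n] [DecidableEq n]

def householder (v : n → ℝ) : Matrix n n ℝ := 1 - (2 : ℝ) • vecMulVec v v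

theorem householder_mem_orthogonalGroup {v : n → ℝ} (hv : v ⬝ᵥ v = 1) :
    householder v ∈ orthogonalGroup n ℝ := by
  rw [mem_orthogonalGroup_iff', householder, transpose_sub, transpose_one, transpose_smul,
    transpose_vecMulVec, sub_mul, mul_sub, mul_sub, smul_mul_smul_comm, vecMulVec_mul_vecMulVec, hv]
  simp only [one_mul, mul_one, one_smul, mul_smul]
  module

theorem householder_mul_apply (v : n → ℝ) (U : Matrix n n ℝ) (a j : n) :
    (householder v * U) a j = U a j - 2 * v a * ∑ c, v c * U c j := by
  simp [householder, sub_mul, vecMulVec_mul, vecMulVec_apply, vecMul, dotProduct, mul_assoc]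

theorem sum_sq_apply_eq_one {U : Matrix n n ℝ} (hU : U ∈ orthogonalGroup n ℝ) (j : n) :
    ∑ i, U i j ^ 2 = 1 := by
  simpa [mul_apply, sq] using congrFun (congrFun ((mem_orthogonalGroup_iff' (A := U)).mp hU) j) j

theorem exists_mem_orthogonalGroup_mixing {i k : n} (hik : i ≠ k) :
    ∃ g ∈ orthogonalGroup n ℝ, ∀ (U : Matrix n n ℝ) (j : n),
      (g * U) i j = -(√2 / 2) * (U i j + U k j) ∧ (g * U) k j = √2 / 2 * (U k j - U i j) := by
  -- the reflection along `cos (π/8) eᵢ + sin (π/8) eₖ` acts on rows `i, k` by angle `π/4`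
  set v : n → ℝ := Pi.single i (cos (π / 8)) + Pi.single k (sin (π / 8))
  have hvi : v i = cos (π / 8) := by simp [v, hik]
  have hvk : v k = sin (π / 8) := by simp [v, hik.symm]
  have hdot : ∀ w : n → ℝ, ∑ c, v c * w c = v i * w i + v k * w k := by
    intro w
    simp [v, add_mul, Finset.sum_add_distrib, Pi.single_apply, hik]
  have hcos : 1 - 2 * cos (π / 8) ^ 2 = -(√2 / 2) := by
    rw [← cos_pi_div_four, show π / 4 = 2 * (π / 8) by ring, cos_two_mul]; ring
  have hsin : 2 * sin (π / 8) * cos (π / 8) = √2 / 2 := by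
    rw [← sin_pi_div_four, show π / 4 = 2 * (π / 8) by ring, sin_two_mul]
  refine ⟨householder v, householder_mem_orthogonalGroup ?_, fun U j => ?_⟩
  · rw [dotProduct, hdot, hvi, hvk]
    linear_combination sin_sq_add_cos_sq (π / 8)
  · rw [householder_mul_apply, householder_mul_apply, hdot fun c => U c j, hvi, hvk]
    constructor
    · linear_combination U i j * hcos - U k j * hsin
    · linear_combination (-(U i j)) * hsin - U k j * hcos - 2 * U k j * sin_sq_add_cos_sq (π / 8)

theorem isCompact_orthogonalGroup : IsCompact (orthogonalGroup n ℝ : Set (Matrix n n ℝ)) := by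
  refine (isCompact_univ_pi fun _ => isCompact_univ_pi fun _ => isCompact_Icc (a := -1) (b := 1))
    |>.of_isClosed_subset ?_ fun U hU => ?_
  · have : (orthogonalGroup n ℝ : Set (Matrix n n ℝ)) = {A | Aᵀ * A = 1} :=
      Set.ext fun A => mem_orthogonalGroup_iff' n ℝ
    rw [this]
    exact isClosed_eq (by fun_prop) continuous_const
  · exact fun i _ j _ => abs_le.mp (entry_norm_bound_of_unitary hU i j)

instance : CompactSpace (orthogonalGroup n ℝ) :=
  isCompact_iff_compactSpace.mp isCompact_orthogonalGroup

@[fun_prop]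
theorem continuous_orthogonalGroup_apply (i j : n) :
    Continuous fun U : orthogonalGroup n ℝ => U.1 i j :=
  continuous_subtype_val.matrix_elem i j

theorem sub_le_sum_abs_apply {U : Matrix n n ℝ} (hU : U ∈ orthogonalGroup n ℝ) :
    3 * Fintype.card n - 4 * ∑ i, ∑ j, U i j ^ 4 ≤ ∑ i, ∑ j, |U i j| := by
  have hsq : ∑ i, ∑ j, U i j ^ 2 = Fintype.card n := by
    simp [Finset.sum_comm (f := fun i j => U i j ^ 2), sum_sq_apply_eq_one hU]
  calc 3 * (Fintype.card n : ℝ) - 4 * ∑ i, ∑ j, U i j ^ 4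
      = ∑ i, ∑ j, (3 * U i j ^ 2 - 4 * U i j ^ 4) := by
        simp only [Finset.sum_sub_distrib, ← Finset.mul_sum, hsq]
    _ ≤ ∑ i, ∑ j, |U i j| := by
        gcongr with i _ j _
        exact three_mul_sq_sub_four_mul_pow_four_le_abs _

end Matrix

instance matrixBorelSpace (N : ℕ) : BorelSpace (Matrix (Fin N) (Fin N) ℝ) :=
  inferInstanceAs (BorelSpace (Fin N → Fin N → ℝ))

section HaarMoments

variable {N : ℕ} {μ : Measure (orthogonalGroup (Fin N) ℝ)} [IsProbabilityMeasure μ]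

theorem integral_apply_sq_mul_apply_sq (hμ : ∀ g, MeasurePreserving (g * ·) μ μ) {i k : Fin N}
    (hik : i ≠ k) (j : Fin N) :
    6 * ∫ U, U.1 i j ^ 2 * U.1 k j ^ 2 ∂μ = ∫ U, U.1 i j ^ 4 ∂μ + ∫ U, U.1 k j ^ 4 ∂μ := by
  obtain ⟨g, hg, hmix⟩ := exists_mem_orthogonalGroup_mixing hik
  have hquartic : ∀ U : orthogonalGroup (Fin N) ℝ,
      (g * U.1) i j ^ 4 + (g * U.1) k j ^ 4
        = (U.1 i j ^ 4 + U.1 k j ^ 4) / 2 + 3 * (U.1 i j ^ 2 * U.1 k j ^ 2) := by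
    intro U
    obtain ⟨hi, hk⟩ := hmix U.1 j
    rw [hi, hk]
    linear_combination ((√2 ^ 2 + 2) * ((U.1 i j + U.1 k j) ^ 4 + (U.1 k j - U.1 i j) ^ 4) / 16) *
      sq_sqrt (show (0 : ℝ) ≤ 2 by norm_num)
  have hinv := (hμ ⟨g, hg⟩).integral_comp_of_aestronglyMeasurable
    (f := fun U => U.1 i j ^ 4 + U.1 k j ^ 4) (by fun_prop : Continuous _).aestronglyMeasurable
  simp only [Submonoid.coe_mul, hquartic] at hinv
  rw [integral_add (Continuous.integrable_of_compactSpace (by fun_prop))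
      (Continuous.integrable_of_compactSpace (by fun_prop)), integral_div, integral_const_mul,
    integral_add (Continuous.integrable_of_compactSpace (by fun_prop))
      (Continuous.integrable_of_compactSpace (by fun_prop))] at hinv
  linarith

theorem sum_integral_apply_pow_four (hμ : ∀ g, MeasurePreserving (g * ·) μ μ) (j : Fin N) :
    ∑ i, ∫ U, U.1 i j ^ 4 ∂μ = 3 / (N + 2) := by
  set m : Fin N → ℝ := fun i => ∫ U, U.1 i j ^ 4 ∂μ
  have hpair : ∀ i k, 6 * ∫ U, U.1 i j ^ 2 * U.1 k j ^ 2 ∂μ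
      = m i + m k + if i = k then 4 * m i else 0 := by
    intro i k
    rcases eq_or_ne i k with rfl | hik
    · simp only [m, if_true, ← pow_add]
      ring
    · rw [if_neg hik, add_zero]
      exact integral_apply_sq_mul_apply_sq hμ hik j
  have hone : ∑ i, ∑ k, ∫ U, U.1 i j ^ 2 * U.1 k j ^ 2 ∂μ = 1 := by
    have hrow : ∀ i, ∑ k, ∫ U, U.1 i j ^ 2 * U.1 k j ^ 2 ∂μ
        = ∫ U, ∑ k, U.1 i j ^ 2 * U.1 k j ^ 2 ∂μ := fun i =>
      (integral_finsetSum _ fun _ _ => Continuous.integrable_of_compactSpace (by fun_prop)).symm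
    rw [Finset.sum_congr rfl fun i _ => hrow i,
      ← integral_finsetSum _ fun _ _ => Continuous.integrable_of_compactSpace (by fun_prop)]
    simp_rw [← Finset.sum_mul_sum, ← sq, sum_sq_apply_eq_one (Subtype.prop _) j]
    simp
  have hM : 6 = (2 * N + 4) * ∑ i, m i := by
    calc (6 : ℝ) = ∑ i, ∑ k, 6 * ∫ U, U.1 i j ^ 2 * U.1 k j ^ 2 ∂μ := by
          simp_rw [← Finset.mul_sum, hone, mul_one]
      _ = (2 * N + 4) * ∑ i, m i := by
          simp only [hpair, Finset.sum_add_distrib, Finset.sum_ite_eq, Finset.mem_univ, if_true,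
            Finset.sum_const, Finset.card_univ, Fintype.card_fin, nsmul_eq_mul, ← Finset.mul_sum]
          ring
  rw [eq_div_iff (by positivity)]
  linarith

theorem integral_sum_apply_pow_four_le (hμ : ∀ g, MeasurePreserving (g * ·) μ μ) :
    ∫ U, ∑ i, ∑ j, U.1 i j ^ 4 ∂μ ≤ 3 := by
  have hrow : ∀ i, ∫ U, ∑ j, U.1 i j ^ 4 ∂μ = ∑ j, ∫ U, U.1 i j ^ 4 ∂μ := fun i =>
    integral_finsetSum _ fun _ _ => Continuous.integrable_of_compactSpace (by fun_prop)
  rw [integral_finsetSum _ fun _ _ => Continuous.integrable_of_compactSpace (by fun_prop),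
    Finset.sum_congr rfl fun i _ => hrow i, Finset.sum_comm]
  simp only [sum_integral_apply_pow_four hμ, Finset.sum_const, Finset.card_univ, Fintype.card_fin,
    nsmul_eq_mul]
  rw [mul_div_assoc', div_le_iff₀ (by positivity)]
  linarith

theorem sub_le_integral_sum_abs_apply (hμ : ∀ g, MeasurePreserving (g * ·) μ μ) :
    3 * N - 12 ≤ ∫ U, ∑ i, ∑ j, |U.1 i j| ∂μ := by
  have hT : Integrable (fun U : orthogonalGroup (Fin N) ℝ => ∑ i, ∑ j, U.1 i j ^ 4) μ :=
    Continuous.integrable_of_compactSpace (by fun_prop)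
  have hS : Integrable (fun U : orthogonalGroup (Fin N) ℝ => ∑ i, ∑ j, |U.1 i j|) μ :=
    Continuous.integrable_of_compactSpace (by fun_prop)
  calc 3 * (N : ℝ) - 12 ≤ 3 * N - 4 * ∫ U, ∑ i, ∑ j, U.1 i j ^ 4 ∂μ := by
        linarith [integral_sum_apply_pow_four_le hμ]
    _ = ∫ U, (3 * N - 4 * ∑ i, ∑ j, U.1 i j ^ 4) ∂μ := by
        rw [integral_sub (integrable_const _) (hT.const_mul 4), integral_const, integral_const_mul,
          probReal_univ, one_smul]
    _ ≤ ∫ U, ∑ i, ∑ j, |U.1 i j| ∂μ :=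
        integral_mono ((integrable_const _).sub (hT.const_mul 4)) hS fun U => by
          simpa using sub_le_sum_abs_apply U.2

end HaarMoments

/-- Let `I₂(N) = ∫_{O(N)} ‖U‖₁² dU`, the second moment of the 1-norm with respect
to the Haar probability measure (i.e. the left-invariant probability measure) on
the compact group `O(N)`. Then for every `ε > 0` there is `N₀` such that
`I₂(N) ≥ (1 + 4/π − ε)·N²` for all `N ≥ N₀`. -/
theorem second_moment_norm1_asymptotic :
    ∀ ε > (0 : ℝ), ∃ N₀ : ℕ, ∀ N ≥ N₀,
      ∀ μ : Measure (Matrix.orthogonalGroup (Fin N) ℝ),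
        IsProbabilityMeasure μ →
        (∀ g : Matrix.orthogonalGroup (Fin N) ℝ,
          MeasurePreserving (fun x => g * x) μ μ) →
        (1 + 4 / Real.pi - ε) * (N : ℝ) ^ 2 ≤
          ∫ U, (∑ i, ∑ j, |(U : Matrix (Fin N) (Fin N) ℝ) i j|) ^ 2 ∂μ := by
  intro ε hε
  refine ⟨12, fun N hN μ _ hμ => ?_⟩
  have hN12 : (12 : ℝ) ≤ N := by exact_mod_cast hN
  have hmean : 2 * (N : ℝ) ≤ ∫ U, ∑ i, ∑ j, |U.1 i j| ∂μ := by
    linarith [sub_le_integral_sum_abs_apply hμ]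
  have hconst : 1 + 4 / π - ε ≤ 2 ^ 2 := by
    have : 4 / π ≤ 3 := by rw [div_le_iff₀ pi_pos]; linarith [pi_gt_three]
    linarith
  calc (1 + 4 / π - ε) * (N : ℝ) ^ 2 ≤ (2 * N) ^ 2 := by rw [mul_pow]; gcongr
    _ ≤ (∫ U, ∑ i, ∑ j, |U.1 i j| ∂μ) ^ 2 := by gcongr
    _ ≤ _ := sq_integral_le_integral_sq (Continuous.integrable_of_compactSpace (by fun_prop))
      (Continuous.integrable_of_compactSpace (by fun_prop))
end
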